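/- arXiv:2311.08814 — 12 statements merged into one kernel-verified Lean document; each statement's English description precedes it below -/
import Mathlib

section
/- Let G be a topological group and K a strongly neutral subgroup of G (i.e., for every open set O containing K there is an open neighborhood V of the identity with KV ⊆ O). Then for every closed subset F of G, both KF and FK are closed in G. -/
open scoped Pointwise

namespace Subgroup

variable {G : Type*} [Group G] [TopologicalSpace G]

def IsStronglyNeutral (K : Subgroup G) : Prop :=
  ∀ O : Set G, IsOpen O → (K : Set G) ⊆ O →
    ∃ V : Set G, IsOpen V ∧ (1 : G) ∈ V ∧ (K : Set G) * V ⊆ O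

namespace IsStronglyNeutral

variable [IsTopologicalGroup G] {K : Subgroup G} {F : Set G}

/- For `x ∉ F * K` the open set `O = {g | x * g⁻¹ ∉ F}` contains `K`; if `K * V ⊆ O`,
then `x • V⁻¹` misses `F * K`. -/
theorem isClosed_mul_subgroup (hK : K.IsStronglyNeutral) (hF : IsClosed F) :
    IsClosed (F * (K : Set G)) := by
  refine isOpen_compl_iff.mp (isOpen_iff_forall_mem_open.mpr fun x hx => ?_)
  have hKO : (K : Set G) ⊆ {g | x * g⁻¹ ∉ F} :=
    fun k hk hxk => hx ⟨x * k⁻¹, hxk, k, hk, by group⟩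
  obtain ⟨V, hVo, hV1, hKV⟩ :=
    hK _ (hF.preimage (by fun_prop : Continuous fun g : G => x * g⁻¹)).isOpen_compl hKO
  refine ⟨x • V⁻¹, ?_, hVo.inv.smul x, 1, by simpa using hV1, mul_one x⟩
  rintro _ ⟨v, hv, rfl⟩ ⟨f, hf, k, hk, hfk⟩
  simp only [smul_eq_mul] at hfk
  have hxkv : x * (k * v⁻¹)⁻¹ = f := by
    rw [mul_inv_rev, inv_inv, ← mul_assoc, ← hfk]
    group
  exact hKV ⟨k, hk, v⁻¹, hv, rfl⟩ (show x * (k * v⁻¹)⁻¹ ∈ F from hxkv ▸ hf)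

theorem isClosed_subgroup_mul (hK : K.IsStronglyNeutral) (hF : IsClosed F) :
    IsClosed ((K : Set G) * F) := by
  have hKF : (K : Set G) * F = (F⁻¹ * (K : Set G))⁻¹ := by
    rw [mul_inv_rev, inv_inv, inv_coe_set]
  rw [hKF]
  exact (hK.isClosed_mul_subgroup hF.inv).inv

end IsStronglyNeutral

end Subgroup

/-- If `K` is a strongly neutral subgroup of a topological group `G`,
then `KF` and `FK` are closed for every closed `F ⊆ G`. -/
theorem stmt_0 {G : Type*} [Group G] [TopologicalSpace G] [IsTopologicalGroup G]
    (K : Subgroup G)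
    (hK : ∀ O : Set G, IsOpen O → (K : Set G) ⊆ O →
      ∃ V : Set G, IsOpen V ∧ (1 : G) ∈ V ∧ (K : Set G) * V ⊆ O)
    (F : Set G) (hF : IsClosed F) :
    IsClosed ((K : Set G) * F) ∧ IsClosed (F * (K : Set G)) :=
  ⟨Subgroup.IsStronglyNeutral.isClosed_subgroup_mul hK hF,
    Subgroup.IsStronglyNeutral.isClosed_mul_subgroup hK hF⟩
end

section
/- Let G be a topological group and K a strongly neutral subgroup of G. Then the natural quotient map π : G → G/K onto the left coset space is a closed map (in addition to being open and continuous). -/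
/-!
Since `π⁻¹(π C) = C * K`, closedness of `π` amounts to `C * K` being closed for closed `C`.
If `x ∉ C * K`, then `K` lies in the open set `{g | x * g⁻¹ ∉ C}`; strong neutrality thickens `K`
to `K * V` inside it, and then `x * V⁻¹` is a neighbourhood of `x` missing `C * K`.
-/

open scoped Pointwise

def Subgroup.IsStronglyNeutral_s1 {G : Type*} [Group G] [TopologicalSpace G] (K : Subgroup G) :
    Prop :=
  ∀ O : Set G, IsOpen O → (K : Set G) ⊆ O →
    ∃ V : Set G, IsOpen V ∧ (1 : G) ∈ V ∧ (K : Set G) * V ⊆ O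

theorem Subgroup.IsStronglyNeutral_s1.isClosed_mul {G : Type*} [Group G] [TopologicalSpace G]
    [IsTopologicalGroup G] {K : Subgroup G} (hK : K.IsStronglyNeutral_s1) {C : Set G}
    (hC : IsClosed C) : IsClosed (C * (K : Set G)) := by
  refine isOpen_compl_iff.mp (isOpen_iff_forall_mem_open.mpr fun (x : G) hx => ?_)
  have hO : IsOpen {g : G | x * g⁻¹ ∉ C} := hC.isOpen_compl.preimage (by fun_prop)
  have hKO : (K : Set G) ⊆ {g : G | x * g⁻¹ ∉ C} := fun k hk hxk =>
    hx ⟨_, hxk, k, hk, by group⟩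
  obtain ⟨V, hVo, hV1, hKV⟩ := hK _ hO hKO
  refine ⟨x • V⁻¹, ?_, hVo.inv.smul x, ⟨1, by simpa using hV1, by simp⟩⟩
  rintro _ ⟨v, hv, rfl⟩ ⟨c, hc, k, hk, hck : c * k = x * v⟩
  apply hKV (Set.mul_mem_mul hk (Set.mem_inv.mp hv))
  rwa [mul_inv_rev, inv_inv, ← mul_assoc, ← hck, mul_inv_cancel_right]

/-- If `K` is a strongly neutral subgroup of a topological group `G`,
then the quotient map `G → G/K` is closed (in addition to open and continuous). -/
theorem stmt_1 {G : Type*} [Group G] [TopologicalSpace G] [IsTopologicalGroup G]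
    (K : Subgroup G)
    (hK : ∀ O : Set G, IsOpen O → (K : Set G) ⊆ O →
      ∃ V : Set G, IsOpen V ∧ (1 : G) ∈ V ∧ (K : Set G) * V ⊆ O) :
    Continuous (QuotientGroup.mk : G → G ⧸ K) ∧
      IsOpenMap (QuotientGroup.mk : G → G ⧸ K) ∧
      IsClosedMap (QuotientGroup.mk : G → G ⧸ K) := by
  refine ⟨continuous_quotient_mk', QuotientGroup.isOpenMap_coe, fun C hC => ?_⟩
  rw [← (QuotientGroup.isQuotientMap_mk K).isClosed_preimage,
    QuotientGroup.preimage_image_mk_eq_mul]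
  exact Subgroup.IsStronglyNeutral_s1.isClosed_mul hK hC
end

section
/- Let G be a topological group, K a strongly neutral subgroup, and H a closed subgroup of G. Then the double coset space K\G/H with the quotient topology is a regular topological space. -/
/-!
The quotient map `π : G → K\G/H` is open, since `π⁻¹(π S) = K S H`. Strong neutrality of `K`
yields two facts: `K F` is closed for closed `F`, so every double coset `K x H = K (x H)` is
closed; and `closure (K S) ⊆ K M S` for every neighbourhood `M` of `1`. Given a neighbourhood
`U` of `π x`, choose `A ∈ 𝓝 1` and `B ∈ 𝓝 x` with `A B ⊆ π⁻¹ U`; then the closure of `K B H`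
lies in `K A B H ⊆ π⁻¹ U`, so `π B` is a neighbourhood of `π x` whose closure lies in `U`.
-/

open scoped Pointwise

instance dosetQuotientTopology {G : Type*} [Group G] [TopologicalSpace G] (K H : Set G) :
    TopologicalSpace (DoubleCoset.Quotient K H) :=
  inferInstanceAs (TopologicalSpace (Quotient (DoubleCoset.setoid K H)))

open scoped Topology

def StronglyNeutral {G : Type*} [Group G] [TopologicalSpace G] (K : Set G) : Prop :=
  ∀ O : Set G, IsOpen O → K ⊆ O → ∃ V : Set G, IsOpen V ∧ (1 : G) ∈ V ∧ K * V ⊆ O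

namespace StronglyNeutral

variable {G : Type*} [Group G] [TopologicalSpace G] [IsTopologicalGroup G] {K : Subgroup G}

theorem isClosed_mul (hK : StronglyNeutral (K : Set G)) {F : Set G} (hF : IsClosed F) :
    IsClosed ((K : Set G) * F) := by
  refine isOpen_compl_iff.mp (isOpen_iff_mem_nhds.mpr fun y hy => ?_)
  have hKO : (K : Set G) ⊆ ((· * y) ⁻¹' F)ᶜ := fun k hk hky =>
    hy ⟨k⁻¹, K.inv_mem hk, k * y, hky, by group⟩
  obtain ⟨V, hVo, hV1, hKV⟩ := hK _ (hF.preimage (continuous_mul_const y)).isOpen_compl hKO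
  have hVy : (· * y⁻¹) ⁻¹' V ∈ 𝓝 y :=
    (continuous_mul_const y⁻¹).continuousAt.preimage_mem_nhds (by simpa using hVo.mem_nhds hV1)
  refine Filter.mem_of_superset hVy ?_
  rintro _ hz ⟨k, hk, f, hf, rfl⟩
  exact hKV ⟨k⁻¹, K.inv_mem hk, _, hz, rfl⟩ (by simpa [mul_assoc] using hf)

theorem closure_mul_subset (hK : StronglyNeutral (K : Set G)) (S : Set G) {M : Set G}
    (hM : M ∈ 𝓝 1) : closure ((K : Set G) * S) ⊆ K * M * S := by
  obtain ⟨V, hVo, hV1, hKV⟩ := hK (interior M⁻¹ * K) isOpen_interior.mul_right fun k hk =>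
    ⟨1, mem_interior_iff_mem_nhds.mpr (inv_mem_nhds_one G hM), k, hk, one_mul k⟩
  have hW : V ∩ V⁻¹ ∈ 𝓝 (1 : G) :=
    Filter.inter_mem (hVo.mem_nhds hV1) (inv_mem_nhds_one G (hVo.mem_nhds hV1))
  refine (closure_subset_mul_left_of_mem_nhds_one_of_inv _ hW
    fun w hw => ⟨hw.2, by simpa using hw.1⟩).trans ?_
  rintro _ ⟨w, hw, _, ⟨k, hk, s, hs, rfl⟩, rfl⟩
  -- Inverting `K V ⊆ M⁻¹ K` gives `V⁻¹ K ⊆ K M`, which moves `w ∈ V⁻¹` past `k`.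
  obtain ⟨n, hn, k', hk', hnk⟩ := hKV ⟨k⁻¹, K.inv_mem hk, w⁻¹, hw.2, rfl⟩
  refine ⟨k'⁻¹ * n⁻¹, ⟨k'⁻¹, K.inv_mem hk', n⁻¹, by simpa using interior_subset hn, rfl⟩, s, hs, ?_⟩
  rw [← mul_inv_rev, show n * k' = k⁻¹ * w⁻¹ from hnk]
  group

end StronglyNeutral

namespace DoubleCoset

variable {G : Type*} [Group G] (K H : Subgroup G)

theorem preimage_image_mk (S : Set G) : mk K H ⁻¹' (mk K H '' S) = (K : Set G) * S * H := by
  ext y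
  simp only [Set.mem_preimage, Set.mem_image, eq, Set.mem_mul]
  constructor
  · rintro ⟨s, hs, k, hk, h, hh, rfl⟩
    exact ⟨_, ⟨k, hk, s, hs, rfl⟩, h, hh, rfl⟩
  · rintro ⟨_, ⟨k, hk, s, hs, rfl⟩, h, hh, rfl⟩
    exact ⟨s, hs, k, hk, h, hh, rfl⟩

theorem mk_surjective : Function.Surjective (mk K H) := Quotient.mk''_surjective

variable [TopologicalSpace G]

theorem isQuotientMap_mk : Topology.IsQuotientMap (mk K H) := isQuotientMap_quotient_mk'

variable [IsTopologicalGroup G]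

theorem isOpenMap_mk : IsOpenMap (mk K H) := fun U hU => by
  rw [← (isQuotientMap_mk K H).isOpen_preimage, preimage_image_mk]
  exact hU.mul_left.mul_right

theorem t1Space_quotient (hK : StronglyNeutral (K : Set G)) (hH : IsClosed (H : Set G)) :
    T1Space (Quotient (K : Set G) H) := by
  refine ⟨fun q => ?_⟩
  obtain ⟨x, rfl⟩ := mk_surjective K H q
  rw [← Set.image_singleton, ← (isQuotientMap_mk K H).isClosed_preimage, preimage_image_mk,
    mul_assoc, Set.singleton_mul]
  exact hK.isClosed_mul (hH.leftCoset x)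

theorem regularSpace_quotient (hK : StronglyNeutral (K : Set G)) :
    RegularSpace (Quotient (K : Set G) H) := by
  refine .of_exists_mem_nhds_isClosed_subset fun q s hs => ?_
  obtain ⟨x, rfl⟩ := mk_surjective K H q
  have hU : mk K H ⁻¹' s ∈ 𝓝 1 * 𝓝 x := by
    rw [nhds_one_mul_nhds]
    exact (isQuotientMap_mk K H).continuous.continuousAt.preimage_mem_nhds hs
  obtain ⟨A, hA, B, hB, hAB⟩ := Filter.mem_mul.mp hU
  refine ⟨closure (mk K H '' B), Filter.mem_of_superset ((isOpenMap_mk K H).image_mem_nhds hB)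
    subset_closure, isClosed_closure, ?_⟩
  rw [← (mk_surjective K H).preimage_subset_preimage_iff,
    (isOpenMap_mk K H).preimage_closure_eq_closure_preimage (isQuotientMap_mk K H).continuous,
    preimage_image_mk, mul_assoc]
  calc closure ((K : Set G) * (B * (H : Set G)))
        ⊆ (K : Set G) * A * (B * (H : Set G)) := hK.closure_mul_subset _ hA
    _ = (K : Set G) * (A * B) * (H : Set G) := by simp only [mul_assoc]
    _ ⊆ (K : Set G) * (mk K H ⁻¹' s) * (H : Set G) := by gcongr
    _ = mk K H ⁻¹' s := by rw [← preimage_image_mk, Set.image_preimage_eq _ (mk_surjective K H)]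

end DoubleCoset

theorem stmt_4_general {G : Type*} [Group G] [TopologicalSpace G] [IsTopologicalGroup G]
    (K H : Subgroup G)
    (hK : ∀ O : Set G, IsOpen O → (K : Set G) ⊆ O →
      ∃ V : Set G, IsOpen V ∧ (1 : G) ∈ V ∧ (K : Set G) * V ⊆ O)
    (hH : IsClosed (H : Set G)) :
    T1Space (DoubleCoset.Quotient (K : Set G) (H : Set G)) ∧
      RegularSpace (DoubleCoset.Quotient (K : Set G) (H : Set G)) :=
  ⟨DoubleCoset.t1Space_quotient K H hK hH, DoubleCoset.regularSpace_quotient K H hK⟩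

/-- if `K` is strongly neutral and `H` is closed, the double coset
space `K\G/H` is regular (T1 + separation of points from closed sets). -/
theorem stmt_4 {G : Type*} [Group G] [TopologicalSpace G] [IsTopologicalGroup G] [T2Space G]
    (K H : Subgroup G)
    (hK : ∀ O : Set G, IsOpen O → (K : Set G) ⊆ O →
      ∃ V : Set G, IsOpen V ∧ (1 : G) ∈ V ∧ (K : Set G) * V ⊆ O)
    (hH : IsClosed (H : Set G)) :
    T1Space (DoubleCoset.Quotient (K : Set G) (H : Set G)) ∧
      RegularSpace (DoubleCoset.Quotient (K : Set G) (H : Set G)) :=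
  stmt_4_general K H hK hH
end

section
/- Let K and H be subgroups of a topological group G with K neutral. For each symmetric open neighborhood V of the identity, set E_V = {(π(x), π(y)) : π(y) ∈ π(Vx)} on Z = K\G/H, where π is the canonical map. Then the family {E_V : V symmetric open neighborhood of e} is a base for a uniformity on Z, and the topology induced by this uniformity coincides with the quotient topology on Z. -/
open scoped Pointwise

/-- The entourage `E_V = {(π(x), π(y)) : π(y) ∈ π(Vx)}` on the double coset space
`Z = K\G/H`, where `π` is the canonical map. -/
def dosetEnt {G : Type*} [Group G] [TopologicalSpace G] (K H : Subgroup G) (V : Set G) :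
    Set (DoubleCoset.Quotient (K : Set G) (H : Set G) × DoubleCoset.Quotient (K : Set G) (H : Set G)) :=
  {p | ∃ x : G, p.1 = DoubleCoset.mk K H x ∧ p.2 ∈ DoubleCoset.mk K H '' (V * {x})}

/-!
Write `π : G → K\G/H`. Up to the choice of representatives, `E_V` relates `π x` exactly to the
points `π (k v k' x h)` with `k, k' ∈ K`, `v ∈ V`, `h ∈ H`; so `E_V` is reflexive and, for
`V⁻¹ = V`, symmetric. Neutrality of `K` moves `K` past small neighbourhoods: for every
neighbourhood `W` of `1` there is a symmetric open `V ⊆ W` with `K V ⊆ W K` and `V K ⊆ K W`.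
The first inclusion gives `E_V ○ E_V ⊆ E_{W W}`. The second shows that the `E_V`-ball around
`π x`, which is `π (V K x)`, lies in `π (W x)`; as `π (V x)` lies in that ball, balls and images
of neighbourhoods of `x` are cofinal in each other, so the uniform topology is the quotient one.
-/

open scoped Topology Uniformity SetRel
open Filter Set UniformSpace

section

variable {G : Type*} [Group G] [TopologicalSpace G]

def Subgroup.IsNeutral (K : Subgroup G) : Prop :=
  ∀ U : Set G, IsOpen U → (1 : G) ∈ U →
    ∃ V : Set G, IsOpen V ∧ (1 : G) ∈ V ∧ (K : Set G) * V ⊆ U * (K : Set G)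

lemma exists_symm_open_subset_of_mem_nhds_one [IsTopologicalGroup G] {U : Set G}
    (hU : U ∈ 𝓝 (1 : G)) : ∃ V : Set G, (IsOpen V ∧ (1 : G) ∈ V ∧ V⁻¹ = V) ∧ V ⊆ U := by
  obtain ⟨W, hWU, hWo, hW1⟩ := mem_nhds_iff.1 hU
  refine ⟨W ∩ W⁻¹, ⟨hWo.inter hWo.inv, ⟨hW1, by simpa using hW1⟩, ?_⟩,
    inter_subset_left.trans hWU⟩
  rw [inter_inv, inv_inv, inter_comm]

lemma Subgroup.IsNeutral.exists_symm_open_subset [IsTopologicalGroup G] {K : Subgroup G}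
    (hK : K.IsNeutral) {U : Set G} (hU : U ∈ 𝓝 (1 : G)) :
    ∃ V : Set G, (IsOpen V ∧ (1 : G) ∈ V ∧ V⁻¹ = V) ∧ V ⊆ U ∧
      (K : Set G) * V ⊆ U * K ∧ V * K ⊆ K * U := by
  obtain ⟨U₀, ⟨hU₀o, hU₀1, hU₀s⟩, hU₀U⟩ := exists_symm_open_subset_of_mem_nhds_one hU
  obtain ⟨V₁, hV₁o, hV₁1, hKV₁⟩ := hK U₀ hU₀o hU₀1
  obtain ⟨V, hV, hVsub⟩ := exists_symm_open_subset_of_mem_nhds_one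
    (inter_mem (hV₁o.mem_nhds hV₁1) (hU₀o.mem_nhds hU₀1))
  have hKV : (K : Set G) * V ⊆ U₀ * K :=
    (mul_subset_mul_left (hVsub.trans inter_subset_left)).trans hKV₁
  refine ⟨V, hV, hVsub.trans (inter_subset_right.trans hU₀U),
    hKV.trans (mul_subset_mul_right hU₀U), ?_⟩
  calc V * K = ((K : Set G) * V)⁻¹ := by rw [mul_inv_rev, hV.2.2, inv_coe_set]
    _ ⊆ (U₀ * K)⁻¹ := inv_subset_inv.2 hKV
    _ = K * U₀ := by rw [mul_inv_rev, hU₀s, inv_coe_set]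
    _ ⊆ K * U := mul_subset_mul_left hU₀U

variable (K H : Subgroup G)

local notation "π" => DoubleCoset.mk K H

lemma mk_mem_dosetEnt_iff {V : Set G} {x y : G} :
    (π x, π y) ∈ dosetEnt K H V ↔
      ∃ k₁ ∈ K, ∃ v ∈ V, ∃ k₂ ∈ K, ∃ h ∈ H, y = k₁ * v * k₂ * x * h := by
  constructor
  · rintro ⟨x', hx', z, ⟨v, hv, _, rfl, rfl⟩, hzy⟩
    obtain ⟨k₂, hk₂, h₀, hh₀, rfl⟩ := (DoubleCoset.eq _ _ _ _).1 hx'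
    obtain ⟨k₁, hk₁, h₁, hh₁, rfl⟩ := (DoubleCoset.eq _ _ _ _).1 hzy
    exact ⟨k₁, hk₁, v, hv, k₂, hk₂, h₀ * h₁, H.mul_mem hh₀ hh₁, by group⟩
  · rintro ⟨k₁, hk₁, v, hv, k₂, hk₂, h, hh, rfl⟩
    refine ⟨k₂ * x, ?_, v * (k₂ * x), mul_mem_mul hv rfl, ?_⟩
    · exact (DoubleCoset.eq _ _ _ _).2 ⟨k₂, hk₂, 1, H.one_mem, by group⟩
    · exact (DoubleCoset.eq _ _ _ _).2 ⟨k₁, hk₁, h, hh, by group⟩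

lemma dosetEnt_mono {V W : Set G} (hVW : V ⊆ W) : dosetEnt K H V ⊆ dosetEnt K H W := by
  rintro _ ⟨x, hx, z, hz, hzb⟩
  exact ⟨x, hx, z, mul_subset_mul_right hVW hz, hzb⟩

lemma refl_mem_dosetEnt {V : Set G} (hV : (1 : G) ∈ V) (a : DoubleCoset.Quotient K H) :
    (a, a) ∈ dosetEnt K H V := by
  induction a using Quotient.inductionOn' with
  | h x =>
    exact (mk_mem_dosetEnt_iff K H).2
      ⟨1, K.one_mem, 1, hV, 1, K.one_mem, 1, H.one_mem, by group⟩

lemma swap_mem_dosetEnt {V : Set G} (hV : V⁻¹ = V)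
    {p : DoubleCoset.Quotient K H × DoubleCoset.Quotient K H} (hp : p ∈ dosetEnt K H V) :
    p.swap ∈ dosetEnt K H V := by
  obtain ⟨a, b⟩ := p
  induction a using Quotient.inductionOn' with | h x =>
  induction b using Quotient.inductionOn' with | h y =>
  obtain ⟨k₁, hk₁, v, hv, k₂, hk₂, h, hh, rfl⟩ := (mk_mem_dosetEnt_iff K H).1 hp
  refine (mk_mem_dosetEnt_iff K H).2
    ⟨k₂⁻¹, K.inv_mem hk₂, v⁻¹, ?_, k₁⁻¹, K.inv_mem hk₁, h⁻¹, H.inv_mem hh, by group⟩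
  rw [← hV]
  exact inv_mem_inv.2 hv

lemma mk_image_mul_singleton_subset_ball (V : Set G) (x : G) :
    π '' (V * {x}) ⊆ ball (π x) (dosetEnt K H V) :=
  fun _ hb => ⟨x, rfl, hb⟩

def dosetUniformity :
    Filter (DoubleCoset.Quotient (K : Set G) H × DoubleCoset.Quotient (K : Set G) H) :=
  ⨅ (V : Set G) (_ : IsOpen V ∧ (1 : G) ∈ V ∧ V⁻¹ = V), 𝓟 (dosetEnt K H V)

lemma hasBasis_dosetUniformity :
    (dosetUniformity K H).HasBasis (fun V : Set G => IsOpen V ∧ (1 : G) ∈ V ∧ V⁻¹ = V)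
      (dosetEnt K H) := by
  refine hasBasis_biInf_principal' ?_ ⟨univ, isOpen_univ, mem_univ _, inv_univ⟩
  rintro V ⟨hVo, hV1, hVs⟩ W ⟨hWo, hW1, hWs⟩
  exact ⟨V ∩ W, ⟨hVo.inter hWo, ⟨hV1, hW1⟩, by rw [inter_inv, hVs, hWs]⟩,
    dosetEnt_mono K H inter_subset_left, dosetEnt_mono K H inter_subset_right⟩

variable [IsTopologicalGroup G] {K}

lemma Subgroup.IsNeutral.exists_dosetEnt_comp_subset (hK : K.IsNeutral) {U : Set G}
    (hU : U ∈ 𝓝 (1 : G)) :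
    ∃ V : Set G, (IsOpen V ∧ (1 : G) ∈ V ∧ V⁻¹ = V) ∧
      dosetEnt K H V ○ dosetEnt K H V ⊆ dosetEnt K H U := by
  obtain ⟨W, hWo, hW1, hWW⟩ := exists_open_nhds_one_mul_subset hU
  obtain ⟨V, hV, hVW, hKV, -⟩ := hK.exists_symm_open_subset (hWo.mem_nhds hW1)
  refine ⟨V, hV, ?_⟩
  rintro ⟨a, c⟩ ⟨b, hab, hbc⟩
  induction a using Quotient.inductionOn' with | h x =>
  induction b using Quotient.inductionOn' with | h y =>
  induction c using Quotient.inductionOn' with | h z =>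
  obtain ⟨k₁, hk₁, v, hv, k₂, hk₂, h, hh, rfl⟩ := (mk_mem_dosetEnt_iff K H).1 hab
  obtain ⟨k₁', hk₁', v', hv', k₂', hk₂', h', hh', rfl⟩ := (mk_mem_dosetEnt_iff K H).1 hbc
  obtain ⟨w, hw, k₃, hk₃, hwk⟩ := hKV (mul_mem_mul (K.mul_mem hk₂' hk₁) hv)
  have hk₂' : k₂' = w * k₃ * v⁻¹ * k₁⁻¹ := by
    rw [show w * k₃ = k₂' * k₁ * v from hwk]; group
  exact (mk_mem_dosetEnt_iff K H).2
    ⟨k₁', hk₁', v' * w, hWW (mul_mem_mul (hVW hv') hw), k₃ * k₂, K.mul_mem hk₃ hk₂,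
      h * h', H.mul_mem hh hh', by rw [hk₂']; group⟩

lemma Subgroup.IsNeutral.exists_ball_dosetEnt_subset (hK : K.IsNeutral) {U : Set G}
    (hU : U ∈ 𝓝 (1 : G)) (x : G) :
    ∃ V : Set G, (IsOpen V ∧ (1 : G) ∈ V ∧ V⁻¹ = V) ∧
      ball (π x) (dosetEnt K H V) ⊆ π '' (U * {x}) := by
  obtain ⟨V, hV, -, -, hVK⟩ := hK.exists_symm_open_subset hU
  refine ⟨V, hV, fun b hb => ?_⟩
  induction b using Quotient.inductionOn' with | h y =>
  obtain ⟨k₁, hk₁, v, hv, k₂, hk₂, h, hh, rfl⟩ := (mk_mem_dosetEnt_iff K H).1 hb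
  obtain ⟨k, hk, u, hu, hku⟩ := hVK (mul_mem_mul hv hk₂)
  refine ⟨u * x, mul_mem_mul hu rfl,
    (DoubleCoset.eq _ _ _ _).2 ⟨k₁ * k, K.mul_mem hk₁ hk, h, hh, ?_⟩⟩
  rw [mul_assoc k₁ v, ← hku]
  group

abbrev dosetUniformSpace (hK : K.IsNeutral) :
    UniformSpace (DoubleCoset.Quotient (K : Set G) H) :=
  .ofCore <| .mk' (dosetUniformity K H)
    (fun _ hr a => by
      obtain ⟨V, hV, hVr⟩ := (hasBasis_dosetUniformity K H).mem_iff.1 hr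
      exact hVr (refl_mem_dosetEnt K H hV.2.1 a))
    (fun _ hr => by
      obtain ⟨V, hV, hVr⟩ := (hasBasis_dosetUniformity K H).mem_iff.1 hr
      exact (hasBasis_dosetUniformity K H).mem_iff.2
        ⟨V, hV, fun _ hp => hVr (swap_mem_dosetEnt K H hV.2.2 hp)⟩)
    (fun _ hr => by
      obtain ⟨U, hU, hUr⟩ := (hasBasis_dosetUniformity K H).mem_iff.1 hr
      obtain ⟨V, hV, hVU⟩ := hK.exists_dosetEnt_comp_subset H (hU.1.mem_nhds hU.2.1)
      exact ⟨_, (hasBasis_dosetUniformity K H).mem_of_mem hV, hVU.trans hUr⟩)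

lemma dosetUniformSpace_toTopologicalSpace (hK : K.IsNeutral) :
    (dosetUniformSpace H hK).toTopologicalSpace = dosetQuotientTopology (K : Set G) H := by
  have hbasis : 𝓤[dosetUniformSpace H hK].HasBasis _ _ := hasBasis_dosetUniformity K H
  ext s
  rw [@isOpen_iff_ball_subset _ (dosetUniformSpace H hK)]
  change _ ↔ IsOpen (π ⁻¹' s)
  rw [isOpen_iff_mem_nhds]
  constructor
  · intro hs x hx
    obtain ⟨_, hr, hrs⟩ := hs _ hx
    obtain ⟨V, hV, hVr⟩ := hbasis.mem_iff.1 hr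
    refine mem_of_superset (mul_singleton_mem_nhds_of_nhds_one x (hV.1.mem_nhds hV.2.1)) ?_
    exact image_subset_iff.1 ((mk_image_mul_singleton_subset_ball K H V x).trans
      ((ball_mono hVr _).trans hrs))
  · intro hs z hz
    induction z using Quotient.inductionOn' with | h x =>
    have hU : (· * x) ⁻¹' (π ⁻¹' s) ∈ 𝓝 (1 : G) := by
      rw [← mem_map, map_mul_right_nhds_one]
      exact hs x hz
    obtain ⟨V, hV, hVs⟩ := hK.exists_ball_dosetEnt_subset H hU x
    refine ⟨_, hbasis.mem_of_mem hV, hVs.trans ?_⟩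
    rintro _ ⟨_, ⟨u, hu, _, rfl, rfl⟩, rfl⟩
    exact hu

end

/-- if `K` is neutral, the family `{E_V : V symmetric open nbhd of e}`
is a base for a uniformity on `Z = K\G/H` inducing the quotient topology. -/
theorem stmt_5 {G : Type*} [Group G] [TopologicalSpace G] [IsTopologicalGroup G]
    (K H : Subgroup G)
    (hK : ∀ U : Set G, IsOpen U → (1 : G) ∈ U →
      ∃ V : Set G, IsOpen V ∧ (1 : G) ∈ V ∧ (K : Set G) * V ⊆ U * (K : Set G)) :
    ∃ 𝒰 : UniformSpace (DoubleCoset.Quotient (K : Set G) (H : Set G)),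
      (@uniformity _ 𝒰).HasBasis
        (fun V : Set G => IsOpen V ∧ (1 : G) ∈ V ∧ V⁻¹ = V)
        (fun V => dosetEnt K H V) ∧
      𝒰.toTopologicalSpace =
        (dosetQuotientTopology (K : Set G) (H : Set G)) :=
  ⟨dosetUniformSpace H hK, hasBasis_dosetUniformity K H,
    dosetUniformSpace_toTopologicalSpace H hK⟩
end

section
/- Let G be a first-countable topological group (no separation axioms assumed beyond the group topology) and H a closed subgroup of G. Then the quotient space G/H is metrizable. -/
/-!
The sets `{(x, v • x) | v ∈ V}`, for `V` ranging over the neighbourhoods of `1` in `G`, form a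
uniformity on `G ⧸ H`: it is symmetric because `V⁻¹` is again a neighbourhood of `1`, and it
satisfies the triangle axiom because every neighbourhood of `1` contains some `W * W`. Since the
quotient map is open, this uniformity induces the quotient topology, and a countable basis at `1`
makes it countably generated. As `H` is closed, `G ⧸ H` is T₁, so the metrization theorem for
uniform spaces with countably generated uniformity applies.
-/

open Filter Set Topology Uniformity
open scoped SetRel

namespace MulAction

variable {G X : Type*} [Group G] [MulAction G X]

def smulEntourage (V : Set G) : SetRel X X := {p | ∃ v ∈ V, v • p.1 = p.2}

theorem monotone_smulEntourage : Monotone (smulEntourage : Set G → SetRel X X) :=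
  fun _ _ hVW _ ⟨v, hv, hvp⟩ => ⟨v, hVW hv, hvp⟩

theorem preimage_mk_smulEntourage (V : Set G) (x : X) :
    Prod.mk x ⁻¹' smulEntourage V = (· • x) '' V :=
  rfl

variable [TopologicalSpace G]

variable (G X) in
def smulUniformity : Filter (X × X) := (𝓝 (1 : G)).lift' smulEntourage

theorem hasBasis_smulUniformity :
    (smulUniformity G X).HasBasis (· ∈ 𝓝 (1 : G)) smulEntourage :=
  (basis_sets _).lift' monotone_smulEntourage

variable [IsTopologicalGroup G]

theorem tendsto_swap_smulUniformity :
    Tendsto Prod.swap (smulUniformity G X) (smulUniformity G X) := by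
  refine (hasBasis_smulUniformity.tendsto_iff hasBasis_smulUniformity).2 fun V hV => ?_
  refine ⟨V⁻¹, inv_mem_nhds_one G hV, ?_⟩
  rintro ⟨x, y⟩ ⟨v, hv, hxy : v • x = y⟩
  exact ⟨v⁻¹, hv, hxy ▸ inv_smul_smul v x⟩

theorem lift'_comp_smulUniformity_le :
    (smulUniformity G X).lift' (fun s => s ○ s) ≤ smulUniformity G X := by
  refine ((hasBasis_smulUniformity.lift' (monotone_id.relComp monotone_id)).le_basis_iff
    hasBasis_smulUniformity).2 fun V hV => ?_
  obtain ⟨W, hW, hWV⟩ := exists_nhds_one_split hV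
  refine ⟨W, hW, ?_⟩
  rintro ⟨x, z⟩ ⟨y, ⟨v, hv, hxy : v • x = y⟩, ⟨w, hw, hyz : w • y = z⟩⟩
  exact ⟨w * v, hWV w hw v hv, by rw [mul_smul, hxy, hyz]⟩

variable [TopologicalSpace X]

abbrev uniformSpaceOfNhdsEqMapSMul (h : ∀ x : X, 𝓝 x = map (· • x) (𝓝 (1 : G))) :
    UniformSpace X where
  uniformity := smulUniformity G X
  symm := tendsto_swap_smulUniformity
  comp := lift'_comp_smulUniformity_le
  nhds_eq_comap_uniformity x := by
    rw [h x]
    refine ((basis_sets _).map _).eq_of_same_basis ?_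
    simpa only [preimage_mk_smulEntourage, id] using hasBasis_smulUniformity.comap (Prod.mk x)

theorem metrizableSpace_of_nhds_eq_map_smul [FirstCountableTopology G] [T0Space X]
    (h : ∀ x : X, 𝓝 x = map (· • x) (𝓝 (1 : G))) :
    TopologicalSpace.MetrizableSpace X := by
  let := uniformSpaceOfNhdsEqMapSMul h
  obtain ⟨b, hb⟩ := (𝓝 (1 : G)).exists_antitone_basis
  have : (𝓤 X).IsCountablyGenerated :=
    (hb.toHasBasis.lift' monotone_smulEntourage).isCountablyGenerated
  -- instance search does not see through the `let` that the two topologies on `X` agree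
  exact @UniformSpace.metrizableSpace X _ this ‹T0Space X›

end MulAction

theorem QuotientGroup.nhds_eq_map_smul {G : Type*} [Group G] [TopologicalSpace G]
    [IsTopologicalGroup G] (H : Subgroup G) (x : G ⧸ H) :
    𝓝 x = Filter.map (· • x) (𝓝 (1 : G)) := by
  induction x using QuotientGroup.induction_on with
  | H g => rw [nhds_eq, ← map_mul_right_nhds_one g, Filter.map_map]; rfl

/-- if `G` is a first-countable topological group (no further separation
axioms) and `H` is a closed subgroup, then the coset space `G/H` is metrizable. -/
theorem stmt_9 {G : Type*} [Group G] [TopologicalSpace G] [IsTopologicalGroup G]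
    [FirstCountableTopology G]
    (H : Subgroup G) (hH : IsClosed (H : Set G)) :
    TopologicalSpace.MetrizableSpace (G ⧸ H) := by
  have : T1Space (G ⧸ H) := QuotientGroup.t1Space_iff.mpr hH
  exact MulAction.metrizableSpace_of_nhds_eq_map_smul (QuotientGroup.nhds_eq_map_smul H)
end

section
/- Let X be a topological space and {U_n : n ∈ ω} a decreasing sequence of open sets with ⋂_n U_n = ⋂_n cl(U_n); put C = ⋂_n U_n. Then the following are equivalent: (1) every sequence (x_n) with x_n ∈ U_n for each n has a cluster point in X; (2) the family {U_n} is a neighborhood base at C in X and C is countably compact. -/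
open Filter Topology

/-!
A cluster point of a sequence with `x n ∈ U n` lies in `⋂ n, closure (U n) = ⋂ n, U n = C`.
Choosing `x n ∈ U n \ O` for an open `O ⊇ C` therefore gives a contradiction, and sequences in
`C` have their cluster points in `C`. Conversely, if `x n ∈ U n` had no cluster point in `C`,
the complements of the closures of the tails of `x` would form an increasing open cover of `C`;
countable compactness puts `C` inside one of them, hence so is some `U k`, which is absurd
since `U k` contains a late term of `x`.
-/

section

variable {X : Type*} [TopologicalSpace X]

theorem isCountablyCompact_iff_forall_mapClusterPt_subtype {C : Set X} :
    IsCountablyCompact C ↔ ∀ x : ℕ → C, ∃ p : C, MapClusterPt p atTop x := by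
  rw [isCountablyCompact_iff_isCountablyCompact_univ, isCountablyCompact_iff_seq_clusterPt]
  simp

theorem mem_iInter_closure_of_mapClusterPt {U : ℕ → Set X} (hU : Antitone U) {x : ℕ → X}
    (hx : ∀ n, x n ∈ U n) {p : X} (hp : MapClusterPt p atTop x) :
    p ∈ ⋂ n, closure (U n) :=
  Set.mem_iInter.2 fun m => isClosed_closure.mem_of_mapClusterPt hp <|
    eventually_atTop.2 ⟨m, fun n hn => subset_closure (hU hn (hx n))⟩

theorem exists_subset_of_forall_mapClusterPt {U : ℕ → Set X} (hU : Antitone U)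
    (h : ∀ x : ℕ → X, (∀ n, x n ∈ U n) → ∃ p, MapClusterPt p atTop x)
    {O : Set X} (hO : IsOpen O) (hUO : ⋂ n, closure (U n) ⊆ O) : ∃ n, U n ⊆ O := by
  by_contra! hne
  choose x hxU hxO using fun n => Set.not_subset.mp (hne n)
  obtain ⟨p, hp⟩ := h x hxU
  have hpO : p ∈ O := hUO (mem_iInter_closure_of_mapClusterPt hU hxU hp)
  exact hO.isClosed_compl.mem_of_mapClusterPt hp (Eventually.of_forall hxO) hpO

theorem isCountablyCompact_iInter_of_forall_mapClusterPt {U : ℕ → Set X} (hU : Antitone U)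
    (h : ∀ x : ℕ → X, (∀ n, x n ∈ U n) → ∃ p, MapClusterPt p atTop x)
    (hcl : ⋂ n, closure (U n) ⊆ ⋂ n, U n) : IsCountablyCompact (⋂ n, U n) := by
  refine isCountablyCompact_iff_forall_mapClusterPt_subtype.2 fun x => ?_
  have hxU (n : ℕ) : (x n : X) ∈ U n := Set.mem_iInter.1 (x n).2 n
  obtain ⟨p, hp⟩ := h (fun n => x n) hxU
  exact ⟨⟨p, hcl (mem_iInter_closure_of_mapClusterPt hU hxU hp)⟩,
    Topology.IsInducing.subtypeVal.mapClusterPt_iff.1 hp⟩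

theorem exists_mapClusterPt_mem_of_isCountablyCompact {U : ℕ → Set X} (hU : Antitone U)
    {C : Set X} (hC : IsCountablyCompact C) (hbase : ∀ O, IsOpen O → C ⊆ O → ∃ n, U n ⊆ O)
    {x : ℕ → X} (hx : ∀ n, x n ∈ U n) : ∃ p ∈ C, MapClusterPt p atTop x := by
  by_contra! hno
  set tail : ℕ → Set X := fun m => closure (x '' Set.Ici m)
  have hcover : C ⊆ ⋃ m, (tail m)ᶜ := fun p hp => by
    simpa [mapClusterPt_atTop_iff_forall_mem_closure, tail] using hno p hp
  have hmono : Monotone fun m => (tail m)ᶜ := fun m m' hm =>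
    Set.compl_subset_compl.2 <| closure_mono <| Set.image_mono <| Set.Ici_subset_Ici.2 hm
  obtain ⟨m, hCm⟩ := hC.elim_directed_cover _ (fun m => isClosed_closure.isOpen_compl)
    hcover hmono.directed_le
  obtain ⟨k, hkm⟩ := hbase _ isClosed_closure.isOpen_compl hCm
  exact hkm (hU (le_max_right m k) (hx _)) (subset_closure ⟨_, le_max_left m k, rfl⟩)

end

theorem stmt_11_general {X : Type*} [TopologicalSpace X] (U : ℕ → Set X)
    (hdec : Antitone U)
    (hcl : ⋂ n, U n = ⋂ n, closure (U n)) (C : Set X) (hC : C = ⋂ n, U n) :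
    (∀ x : ℕ → X, (∀ n, x n ∈ U n) → ∃ p : X, MapClusterPt p atTop x) ↔
      ((∀ O : Set X, IsOpen O → C ⊆ O → ∃ n, U n ⊆ O) ∧
        (∀ x : ℕ → C, ∃ p : C, MapClusterPt p atTop x)) := by
  subst hC
  rw [← isCountablyCompact_iff_forall_mapClusterPt_subtype]
  constructor
  · intro h
    exact ⟨fun O hO hCO => exists_subset_of_forall_mapClusterPt hdec h hO (hcl ▸ hCO),
      isCountablyCompact_iInter_of_forall_mapClusterPt hdec h hcl.ge⟩
  · rintro ⟨hbase, hcc⟩ x hx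
    obtain ⟨p, -, hp⟩ := exists_mapClusterPt_mem_of_isCountablyCompact hdec hcc hbase hx
    exact ⟨p, hp⟩

/-- for a decreasing sequence `{U n}` of open sets with
`⋂ n, U n = ⋂ n, closure (U n)` and `C = ⋂ n, U n`, the following are equivalent:
(1) every sequence `(x n)` with `x n ∈ U n` has a cluster point in `X`;
(2) `{U n}` is a neighborhood base at `C` and `C` is countably compact. -/
theorem stmt_11 {X : Type*} [TopologicalSpace X] (U : ℕ → Set X)
    (hopen : ∀ n, IsOpen (U n)) (hdec : Antitone U)
    (hcl : ⋂ n, U n = ⋂ n, closure (U n)) (C : Set X) (hC : C = ⋂ n, U n) :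
    (∀ x : ℕ → X, (∀ n, x n ∈ U n) → ∃ p : X, MapClusterPt p atTop x) ↔
      ((∀ O : Set X, IsOpen O → C ⊆ O → ∃ n, U n ⊆ O) ∧
        (∀ x : ℕ → C, ∃ p : C, MapClusterPt p atTop x)) :=
  stmt_11_general U hdec hcl C hC
end

section
/- Let G be a topological group possessing a q-point and H a closed subgroup of G. Then there exist a metrizable space M and a continuous mapping f : G/H → M that is open, closed, and has countably compact fibers (i.e., f is an open quasi-perfect map). In particular, G/H is an M-space. -/
/-!
Translating the q-point to `1` and shrinking, one gets closed symmetric neighbourhoods `V n` of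
`1` with `V (n + 1) * V (n + 1) ⊆ V n` such that every sequence with `u n ∈ V n` clusters at a
point of the subgroup `P = ⋂ n, V n`. The relations `yH ∈ V n * xH` form a countable base of a
uniformity on `G ⧸ H` coarser than the quotient topology, so its separation quotient `M` is
metrizable and `G ⧸ H → M` is continuous. Since `H` is closed, `xH` and `yH` have the same image
in `M` iff `y ∈ P x H`; hence the image of `O ⊆ G ⧸ H` pulls back to `P * S`, where `S` is the
preimage of `O` in `G`, and the cluster property makes `P * S` open (closed) for the uniformity
when `S` is open (closed). The same property makes the fibres `P x H / H` countably compact.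
-/

open Filter Topology Pointwise Uniformity SetRel

def IsQPointSeq {X : Type*} [TopologicalSpace X] (x : X) (U : ℕ → Set X) : Prop :=
  (∀ n, U n ∈ 𝓝 x) ∧ ∀ u : ℕ → X, (∀ n, u n ∈ U n) → ∃ p, MapClusterPt p atTop u

namespace IsQPointSeq

variable {X Y : Type*} [TopologicalSpace X] [TopologicalSpace Y] {x : X}

theorem mono {U W : ℕ → Set X} (hU : IsQPointSeq x U) (hW : ∀ n, W n ∈ 𝓝 x)
    (hWU : ∀ n, W n ⊆ U n) : IsQPointSeq x W :=
  ⟨hW, fun u hu => hU.2 u fun n => hWU n (hu n)⟩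

theorem preimage_homeomorph (e : X ≃ₜ Y) {U : ℕ → Set Y} (hU : IsQPointSeq (e x) U) :
    IsQPointSeq x fun n => e ⁻¹' U n := by
  refine ⟨fun n => e.continuous.continuousAt.preimage_mem_nhds (hU.1 n), fun u hu => ?_⟩
  obtain ⟨p, hp⟩ := hU.2 (e ∘ u) hu
  exact ⟨e.symm p, by simpa [Function.comp_def] using
    hp.continuousAt_comp e.symm.continuous.continuousAt⟩

end IsQPointSeq

instance SeparationQuotient.isCountablyGenerated_uniformity {α : Type*} [UniformSpace α]
    [IsCountablyGenerated (𝓤 α)] : IsCountablyGenerated (𝓤 (SeparationQuotient α)) := by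
  rw [SeparationQuotient.uniformity_eq]
  infer_instance

structure QNhdSeq (G : Type*) [Group G] [TopologicalSpace G] where
  nhd : ℕ → Set G
  isQPointSeq : IsQPointSeq 1 nhd
  isClosed : ∀ n, IsClosed (nhd n)
  inv_eq : ∀ n, (nhd n)⁻¹ = nhd n
  mul_subset : ∀ n, nhd (n + 1) * nhd (n + 1) ⊆ nhd n

namespace QNhdSeq

section Basic

variable {G : Type*} [Group G] [TopologicalSpace G]

instance : CoeFun (QNhdSeq G) fun _ => ℕ → Set G := ⟨nhd⟩

variable (V : QNhdSeq G)

theorem one_mem (n : ℕ) : (1 : G) ∈ V n := mem_of_mem_nhds (V.isQPointSeq.1 n)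

theorem inv_mem {n : ℕ} {g : G} (hg : g ∈ V n) : g⁻¹ ∈ V n := by
  rw [← V.inv_eq n]
  exact Set.inv_mem_inv.2 hg

theorem mul_mem {n : ℕ} {a b : G} (ha : a ∈ V (n + 1)) (hb : b ∈ V (n + 1)) : a * b ∈ V n :=
  V.mul_subset n (Set.mul_mem_mul ha hb)

theorem antitone : Antitone V :=
  antitone_nat_of_succ_le fun n g hg => by simpa using V.mul_mem hg (V.one_mem _)

def ker : Subgroup G where
  carrier := ⋂ n, V n
  mul_mem' ha hb := Set.mem_iInter.2 fun n =>
    V.mul_mem (Set.mem_iInter.1 ha (n + 1)) (Set.mem_iInter.1 hb (n + 1))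
  one_mem' := Set.mem_iInter.2 V.one_mem
  inv_mem' ha := Set.mem_iInter.2 fun n => V.inv_mem (Set.mem_iInter.1 ha n)

theorem mem_ker {g : G} : g ∈ V.ker ↔ ∀ n, g ∈ V n := Set.mem_iInter

theorem ker_subset (n : ℕ) : (V.ker : Set G) ⊆ V n := fun _ hg => V.mem_ker.1 hg n

theorem exists_mapClusterPt_mem_ker {u : ℕ → G} (hu : ∀ n, u n ∈ V n) :
    ∃ p ∈ V.ker, MapClusterPt p atTop u := by
  obtain ⟨p, hp⟩ := V.isQPointSeq.2 u hu
  exact ⟨p, V.mem_ker.2 fun n => (V.isClosed n).mem_of_mapClusterPt hp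
    (eventually_atTop.2 ⟨n, fun k hk => V.antitone hk (hu k)⟩), hp⟩

end Basic

section CosetSpace

variable {G : Type*} [Group G] [TopologicalSpace G]

/-- A copy of `G ⧸ H` carrying the uniformity defined by `V`. -/
def CosetSpace (_ : QNhdSeq G) (H : Subgroup G) : Type _ := G ⧸ H

variable (V : QNhdSeq G) (H : Subgroup G)

def toCosetSpace : G ⧸ H → V.CosetSpace H := id

theorem toCosetSpace_surjective : Function.Surjective fun x : G => V.toCosetSpace H x :=
  QuotientGroup.mk_surjective

def entourage (n : ℕ) : Set (V.CosetSpace H × V.CosetSpace H) :=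
  {q | ∃ x y : G, V.toCosetSpace H x = q.1 ∧ V.toCosetSpace H y = q.2 ∧ y * x⁻¹ ∈ V n}

variable {V H}

theorem mk_mem_entourage {n : ℕ} {x y : G} :
    (V.toCosetSpace H x, V.toCosetSpace H y) ∈ V.entourage H n ↔ ∃ h ∈ H, y * h * x⁻¹ ∈ V n := by
  constructor
  · rintro ⟨x', y', hx, hy, hv⟩
    have hx' : x'⁻¹ * x ∈ H := QuotientGroup.eq.1 hx
    have hy' : y'⁻¹ * y ∈ H := QuotientGroup.eq.1 hy
    refine ⟨(y'⁻¹ * y)⁻¹ * (x'⁻¹ * x), H.mul_mem (H.inv_mem hy') hx', ?_⟩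
    convert hv using 1
    group
  · rintro ⟨h, hh, hv⟩
    exact ⟨x, y * h, rfl, QuotientGroup.mk_mul_of_mem y hh, by simpa [mul_assoc] using hv⟩

theorem diag_mem_entourage (n : ℕ) (a : V.CosetSpace H) : (a, a) ∈ V.entourage H n := by
  obtain ⟨x, rfl⟩ := V.toCosetSpace_surjective H a
  exact mk_mem_entourage.2 ⟨1, H.one_mem, by simpa using V.one_mem n⟩

theorem swap_mem_entourage {n : ℕ} {a b : V.CosetSpace H} (hab : (a, b) ∈ V.entourage H n) :
    (b, a) ∈ V.entourage H n := by
  obtain ⟨x, rfl⟩ := V.toCosetSpace_surjective H a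
  obtain ⟨y, rfl⟩ := V.toCosetSpace_surjective H b
  obtain ⟨h, hh, hv⟩ := mk_mem_entourage.1 hab
  exact mk_mem_entourage.2 ⟨h⁻¹, H.inv_mem hh, by simpa [mul_assoc] using V.inv_mem hv⟩

theorem entourage_comp_subset (n : ℕ) :
    V.entourage H (n + 1) ○ V.entourage H (n + 1) ⊆ V.entourage H n := by
  rintro ⟨a, c⟩ ⟨b, hab, hbc⟩
  obtain ⟨x, rfl⟩ := V.toCosetSpace_surjective H a
  obtain ⟨y, rfl⟩ := V.toCosetSpace_surjective H b
  obtain ⟨z, rfl⟩ := V.toCosetSpace_surjective H c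
  obtain ⟨h, hh, hv⟩ := mk_mem_entourage.1 hab
  obtain ⟨k, hk, hw⟩ := mk_mem_entourage.1 hbc
  refine mk_mem_entourage.2 ⟨k * h, H.mul_mem hk hh, ?_⟩
  convert V.mul_mem hw hv using 1
  group

theorem entourage_antitone : Antitone (V.entourage H) :=
  fun _ _ hmn _ ⟨x, y, hx, hy, hv⟩ => ⟨x, y, hx, hy, V.antitone hmn hv⟩

theorem hasBasis_iInf_entourage :
    (⨅ n, 𝓟 (V.entourage H n)).HasBasis (fun _ => True) (V.entourage H) :=
  hasBasis_iInf_principal entourage_antitone.directed_ge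

instance : UniformSpace (V.CosetSpace H) := .ofCore <| .mk' (⨅ n, 𝓟 (V.entourage H n))
  (fun _ hr a => by
    obtain ⟨n, -, hn⟩ := hasBasis_iInf_entourage.mem_iff.1 hr
    exact hn (diag_mem_entourage n a))
  (fun _ hr => by
    obtain ⟨n, -, hn⟩ := hasBasis_iInf_entourage.mem_iff.1 hr
    exact mem_of_superset (hasBasis_iInf_entourage.mem_of_mem (i := n) trivial)
      fun _ hq => hn (swap_mem_entourage hq))
  (fun _ hr => by
    obtain ⟨n, -, hn⟩ := hasBasis_iInf_entourage.mem_iff.1 hr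
    exact ⟨_, hasBasis_iInf_entourage.mem_of_mem (i := n + 1) trivial,
      (entourage_comp_subset n).trans hn⟩)

theorem hasBasis_uniformity : (𝓤 (V.CosetSpace H)).HasBasis (fun _ => True) (V.entourage H) :=
  hasBasis_iInf_entourage

instance : IsCountablyGenerated (𝓤 (V.CosetSpace H)) :=
  hasBasis_uniformity.isCountablyGenerated

theorem isOpen_iff {T : Set (V.CosetSpace H)} :
    IsOpen T ↔ ∀ x : G, V.toCosetSpace H x ∈ T → ∃ n, ∀ v ∈ V n, V.toCosetSpace H ↑(v * x) ∈ T := by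
  rw [isOpen_iff_mem_nhds, (V.toCosetSpace_surjective H).forall]
  refine forall_congr' fun x => imp_congr_right fun _ => ?_
  simp only [(nhds_basis_uniformity' hasBasis_uniformity).mem_iff, true_and]
  refine exists_congr fun n => ⟨fun hball v hv => hball ?_, fun hT b hb => ?_⟩
  · exact mk_mem_entourage.2 ⟨1, H.one_mem, by simpa using hv⟩
  · obtain ⟨y, rfl⟩ := V.toCosetSpace_surjective H b
    obtain ⟨h, hh, hv⟩ := mk_mem_entourage.1 hb
    simpa [QuotientGroup.mk_mul_of_mem y hh] using hT _ hv

variable (V H)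

def proj (a : G ⧸ H) : SeparationQuotient (V.CosetSpace H) :=
  SeparationQuotient.mk (V.toCosetSpace H a)

theorem proj_surjective : Function.Surjective fun x : G => V.proj H x :=
  SeparationQuotient.surjective_mk.comp (V.toCosetSpace_surjective H)

end CosetSpace

section Projection

variable {G : Type*} [Group G] [TopologicalSpace G] [SeparatelyContinuousMul G] (V : QNhdSeq G)

theorem exists_mul_mem_ker_mul_of_isOpen {S : Set G} (hS : IsOpen S) {y : G}
    (hy : y ∈ (V.ker : Set G) * S) : ∃ n, ∀ v ∈ V n, v * y ∈ (V.ker : Set G) * S := by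
  by_contra! hfar
  choose w hw hwS using hfar
  obtain ⟨r, hr, hcl⟩ := V.exists_mapClusterPt_mem_ker hw
  obtain ⟨p, hp, s, hs, rfl⟩ := hy
  -- `w n * (p * s) = (r * p) * φ (w n)` with `φ r = s ∈ S`
  set φ : G → G := fun g => p⁻¹ * r⁻¹ * g * (p * s)
  have hφ : Continuous φ := (continuous_mul_const _).comp (continuous_const_mul _)
  have hrφ : r ∈ φ ⁻¹' S := by simpa [φ, mul_assoc] using hs
  obtain ⟨n, hn⟩ := (hcl.frequently ((hS.preimage hφ).mem_nhds hrφ)).exists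
  exact hwS n ⟨r * p, V.ker.mul_mem hr hp, φ (w n), hn, by simp only [φ]; group⟩

theorem exists_mul_notMem_ker_mul_of_isClosed {S : Set G} (hS : IsClosed S) {y : G}
    (hy : y ∉ (V.ker : Set G) * S) : ∃ n, ∀ v ∈ V n, v * y ∉ (V.ker : Set G) * S := by
  by_contra! hnear
  choose w hw hwS using fun n => hnear (n + 1)
  choose p hp s hs hps using hwS
  obtain ⟨r, hr, hcl⟩ := V.exists_mapClusterPt_mem_ker (u := fun n => (p n)⁻¹ * w n)
    fun n => V.mul_mem (V.inv_mem (V.ker_subset _ (hp n))) (hw n)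
  have hry : r * y ∈ S := by
    refine hS.mem_of_mapClusterPt
      (hcl.continuousAt_comp (f := (· * y)) (continuous_mul_const y).continuousAt)
      (Eventually.of_forall fun n => ?_)
    simpa [mul_assoc, ← hps n] using hs n
  exact hy ⟨r⁻¹, V.ker.inv_mem hr, r * y, hry, by group⟩

variable {V} {H : Subgroup G}

theorem inseparable_iff (hH : IsClosed (H : Set G)) {x y : G} :
    Inseparable (V.toCosetSpace H x) (V.toCosetSpace H y) ↔ ∃ h ∈ H, y * h * x⁻¹ ∈ V.ker := by
  rw [hasBasis_uniformity.inseparable_iff_uniformity]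
  refine ⟨fun hxy => ?_, fun ⟨h, hh, hk⟩ n _ => mk_mem_entourage.2 ⟨h, hh, V.ker_subset n hk⟩⟩
  choose h hh hv using fun n => mk_mem_entourage.1 (hxy n trivial)
  obtain ⟨r, hr, hcl⟩ := V.exists_mapClusterPt_mem_ker hv
  have hrH : y⁻¹ * r * x ∈ H := by
    refine hH.mem_of_mapClusterPt (b := atTop) ?_ (Eventually.of_forall hh)
    simpa [Function.comp_def, mul_assoc] using hcl.continuousAt_comp
      ((continuous_mul_const x).comp (continuous_const_mul y⁻¹)).continuousAt
  exact ⟨_, hrH, by simpa [mul_assoc] using hr⟩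

theorem continuous_toCosetSpace : Continuous (V.toCosetSpace H) := by
  refine continuous_def.2 fun T hT => ?_
  rw [← (QuotientGroup.isQuotientMap_mk H).isOpen_preimage, isOpen_iff_mem_nhds]
  intro x hx
  obtain ⟨n, hn⟩ := isOpen_iff.1 hT x hx
  have hV : V n ∈ 𝓝 (x * x⁻¹) := by simpa using V.isQPointSeq.1 n
  filter_upwards [(continuous_mul_const x⁻¹).continuousAt.preimage_mem_nhds hV] with g hg
  simpa using hn _ hg

variable (V H)

theorem continuous_proj : Continuous (V.proj H) :=
  SeparationQuotient.continuous_mk.comp continuous_toCosetSpace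

variable {V H}

theorem proj_eq_proj_iff (hH : IsClosed (H : Set G)) {x y : G} :
    V.proj H x = V.proj H y ↔ ∃ h ∈ H, y * h * x⁻¹ ∈ V.ker :=
  SeparationQuotient.mk_eq_mk.trans (inseparable_iff hH)

theorem proj_mem_image_iff (hH : IsClosed (H : Set G)) {O : Set (G ⧸ H)} {y : G} :
    V.proj H y ∈ V.proj H '' O ↔ y ∈ (V.ker : Set G) * ((↑) ⁻¹' O) := by
  constructor
  · rintro ⟨a, ha, hay⟩
    obtain ⟨x, rfl⟩ := QuotientGroup.mk_surjective a
    obtain ⟨h, hh, hk⟩ := (proj_eq_proj_iff hH).1 hay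
    refine ⟨_, hk, x * h⁻¹, ?_, by group⟩
    simpa [QuotientGroup.mk_mul_of_mem x (H.inv_mem hh)] using ha
  · rintro ⟨k, hk, x, hx, rfl⟩
    exact ⟨x, hx, (proj_eq_proj_iff hH).2 ⟨1, H.one_mem, by simpa using hk⟩⟩

theorem isOpenMap_proj (hH : IsClosed (H : Set G)) : IsOpenMap (V.proj H) := by
  intro O hO
  rw [← SeparationQuotient.isQuotientMap_mk.isOpen_preimage, isOpen_iff]
  intro y hy
  exact (V.exists_mul_mem_ker_mul_of_isOpen (hO.preimage QuotientGroup.continuous_mk)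
    ((proj_mem_image_iff hH).1 hy)).imp fun n hn v hv => (proj_mem_image_iff hH).2 (hn v hv)

theorem isClosedMap_proj (hH : IsClosed (H : Set G)) : IsClosedMap (V.proj H) := by
  intro C hC
  rw [← SeparationQuotient.isQuotientMap_mk.isClosed_preimage, ← isOpen_compl_iff, isOpen_iff]
  intro y hy
  exact (V.exists_mul_notMem_ker_mul_of_isClosed (hC.preimage QuotientGroup.continuous_mk)
    (mt (proj_mem_image_iff hH).2 hy)).imp fun n hn v hv => mt (proj_mem_image_iff hH).1 (hn v hv)

theorem exists_mapClusterPt_of_proj_eq (hH : IsClosed (H : Set G)) {u : ℕ → G ⧸ H} {x : G}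
    (hu : ∀ n, V.proj H (u n) = V.proj H x) :
    ∃ p, V.proj H p = V.proj H x ∧ MapClusterPt p atTop u := by
  obtain ⟨z, rfl⟩ := QuotientGroup.mk_surjective.comp_left u
  choose h hh hk using fun n => (proj_eq_proj_iff hH).1 (hu n).symm
  obtain ⟨r, hr, hcl⟩ := V.exists_mapClusterPt_mem_ker fun n => V.ker_subset n (hk n)
  refine ⟨(r * x : G), ((proj_eq_proj_iff hH).2 ⟨1, H.one_mem, by simpa using hr⟩).symm, ?_⟩
  convert hcl.continuousAt_comp
    (QuotientGroup.continuous_mk.comp (continuous_mul_const x)).continuousAt using 1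
  · rfl
  · funext n
    simp [QuotientGroup.mk_mul_of_mem _ (hh n)]

end Projection

theorem nonempty_of_isQPointSeq {G : Type*} [Group G] [TopologicalSpace G] [IsTopologicalGroup G]
    {x : G} {U : ℕ → Set G} (hU : IsQPointSeq x U) : Nonempty (QNhdSeq G) := by
  set A : ℕ → Set G := fun n => Homeomorph.mulRight x ⁻¹' U n
  have hA : IsQPointSeq 1 A := .preimage_homeomorph _ (by simpa using hU)
  choose! T hT hTc hTi hTm using fun S (hS : S ∈ 𝓝 (1 : G)) =>
    exists_closed_nhds_one_inv_eq_mul_subset hS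
  -- `T (S n)` will be `V n`: `T (S (n + 1))² ⊆ S (n + 1) ⊆ T (S n)` and `T (S n) ⊆ S n ⊆ A n`
  set S : ℕ → Set G := fun n => Nat.rec (A 0) (fun n Sn => T Sn ∩ A (n + 1)) n
  have hS : ∀ n, S n ∈ 𝓝 1 := by
    intro n
    induction n with
    | zero => exact hA.1 0
    | succ n ih => exact inter_mem (hT _ ih) (hA.1 _)
  have hSA : ∀ n, S n ⊆ A n := by
    rintro (_ | n)
    exacts [subset_rfl, Set.inter_subset_right]
  refine ⟨⟨fun n => T (S n), hA.mono (fun n => hT _ (hS n)) fun n => ?_, fun n => hTc _ (hS n),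
    fun n => hTi _ (hS n), fun n => (hTm _ (hS (n + 1))).trans Set.inter_subset_left⟩⟩
  exact (Set.subset_mul_left _ (mem_of_mem_nhds (hT _ (hS n)))).trans
    ((hTm _ (hS n)).trans (hSA n))

end QNhdSeq

theorem stmt_12_general {G : Type u} [Group G] [TopologicalSpace G] [IsTopologicalGroup G]
    (hq : ∃ (x : G) (U : ℕ → Set G), (∀ n, IsOpen (U n) ∧ x ∈ U n) ∧
      ∀ u : ℕ → G, (∀ n, u n ∈ U n) → ∃ p : G, MapClusterPt p atTop u)
    (H : Subgroup G) (hH : IsClosed (H : Set G)) :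
    ∃ (M : Type u) (_ : TopologicalSpace M) (_ : TopologicalSpace.MetrizableSpace M)
      (f : G ⧸ H → M), Continuous f ∧ IsOpenMap f ∧ IsClosedMap f ∧
        ∀ y : M, ∀ u : ℕ → G ⧸ H, (∀ n, u n ∈ f ⁻¹' {y}) →
          ∃ p ∈ f ⁻¹' {y}, MapClusterPt p atTop u := by
  obtain ⟨x, U, hU, hcluster⟩ := hq
  obtain ⟨V⟩ := QNhdSeq.nonempty_of_isQPointSeq (x := x)
    ⟨fun n => (hU n).1.mem_nhds (hU n).2, hcluster⟩
  refine ⟨_, inferInstance, UniformSpace.metrizableSpace, V.proj H, V.continuous_proj H,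
    QNhdSeq.isOpenMap_proj hH, QNhdSeq.isClosedMap_proj hH, fun y u hu => ?_⟩
  obtain ⟨x, rfl⟩ := V.proj_surjective H y
  exact QNhdSeq.exists_mapClusterPt_of_proj_eq hH hu

/-- if a topological group `G` has a q-point and `H` is a closed
subgroup, then `G/H` admits a continuous open closed map with countably compact
fibers onto a metrizable space; in particular `G/H` is an M-space. -/
theorem stmt_12 {G : Type u} [Group G] [TopologicalSpace G] [IsTopologicalGroup G] [T2Space G]
    (hq : ∃ (x : G) (U : ℕ → Set G), (∀ n, IsOpen (U n) ∧ x ∈ U n) ∧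
      ∀ u : ℕ → G, (∀ n, u n ∈ U n) → ∃ p : G, MapClusterPt p atTop u)
    (H : Subgroup G) (hH : IsClosed (H : Set G)) :
    ∃ (M : Type u) (_ : TopologicalSpace M) (_ : TopologicalSpace.MetrizableSpace M)
      (f : G ⧸ H → M), Continuous f ∧ IsOpenMap f ∧ IsClosedMap f ∧
        ∀ y : M, ∀ u : ℕ → G ⧸ H, (∀ n, u n ∈ f ⁻¹' {y}) →
          ∃ p ∈ f ⁻¹' {y}, MapClusterPt p atTop u :=
  stmt_12_general hq H hH
end

section
/- Let G be a topological group possessing a strict q-point and H a closed subgroup of G. Then there exist a metrizable space M and a continuous open and closed mapping f : G/H → M such that f⁻¹(y) is sequentially compact for every y ∈ M. -/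
/-!
Translating the strict q-point to `1` and shrinking gives symmetric neighbourhoods `V n` of `1` with
`V (n + 1) * V (n + 1) ⊆ V n` along which every sequence clusters. Every such cluster point lies in
the subgroup `N = ⋂ n, V n`; hence `N` is sequentially compact, the `V n` form a neighbourhood base
of `N`, and `N • C` is closed for every closed `C ⊆ G ⧸ H` (if `v n • y ∈ C` with `v n ∈ V n`, a
cluster point `p ∈ N` of `v` gives `p • y ∈ C`). So the orbit map `G ⧸ H → N\G/H` is open and
closed, with sequentially compact fibres `N • a`, and the images of `{(a, v • a) | v ∈ V n}` form a
countable base of a uniformity inducing the quotient topology, which is T1 as the orbit map is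
closed. Hence `N\G/H` is metrizable.
-/

open Filter Topology

open Pointwise Uniformity

section Chain

variable {G : Type*} [Group G] [TopologicalSpace G]

/-- Sequences witnessing that `1` is a q-point, normalized to be symmetric and to halve at each
step. -/
structure IsQChain (V : ℕ → Set G) : Prop where
  mem_nhds : ∀ n, V n ∈ 𝓝 (1 : G)
  inv_eq : ∀ n, (V n)⁻¹ = V n
  mul_subset : ∀ n, V (n + 1) * V (n + 1) ⊆ V n
  exists_mapClusterPt : ∀ v : ℕ → G, (∀ n, v n ∈ V n) → ∃ p, MapClusterPt p atTop v

namespace IsQChain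

variable {V : ℕ → Set G}

theorem one_mem (hV : IsQChain V) (n : ℕ) : (1 : G) ∈ V n := mem_of_mem_nhds (hV.mem_nhds n)

theorem inv_mem (hV : IsQChain V) {n : ℕ} {v : G} (h : v ∈ V n) : v⁻¹ ∈ V n := by
  rw [← hV.inv_eq n]
  exact Set.inv_mem_inv.2 h

theorem antitone (hV : IsQChain V) : Antitone V :=
  antitone_nat_of_succ_le fun n =>
    (Set.subset_mul_left _ (hV.one_mem (n + 1))).trans (hV.mul_subset n)

def subgroup (hV : IsQChain V) : Subgroup G where
  carrier := ⋂ n, V n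
  one_mem' := Set.mem_iInter.2 hV.one_mem
  mul_mem' ha hb := Set.mem_iInter.2 fun n =>
    hV.mul_subset n (Set.mul_mem_mul (Set.mem_iInter.1 ha _) (Set.mem_iInter.1 hb _))
  inv_mem' ha := Set.mem_iInter.2 fun n => hV.inv_mem (Set.mem_iInter.1 ha n)

theorem subgroup_subset (hV : IsQChain V) (n : ℕ) : (hV.subgroup : Set G) ⊆ V n :=
  Set.iInter_subset V n

theorem mul_subgroup_subset (hV : IsQChain V) (n : ℕ) : V (n + 1) * hV.subgroup ⊆ V n :=
  (Set.mul_subset_mul_left (hV.subgroup_subset _)).trans (hV.mul_subset n)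

theorem subgroup_mul_subset (hV : IsQChain V) (n : ℕ) : (hV.subgroup : Set G) * V (n + 1) ⊆ V n :=
  (Set.mul_subset_mul_right (hV.subgroup_subset _)).trans (hV.mul_subset n)

end IsQChain

variable [IsTopologicalGroup G]

theorem exists_seq_inv_eq_mul_subset {W : ℕ → Set G} (hW : ∀ n, W n ∈ 𝓝 (1 : G)) :
    ∃ V : ℕ → Set G, (∀ n, V n ∈ 𝓝 (1 : G) ∧ (V n)⁻¹ = V n ∧ V n ⊆ W n) ∧
      ∀ n, V (n + 1) * V (n + 1) ⊆ V n := by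
  choose B hB _ hBinv hBmul using fun (S : Set G) (hS : S ∈ 𝓝 (1 : G)) =>
    exists_closed_nhds_one_inv_eq_mul_subset hS
  have hB_subset (S) (hS : S ∈ 𝓝 (1 : G)) : B S hS ⊆ S :=
    (Set.subset_mul_left _ (mem_of_mem_nhds (hB S hS))).trans (hBmul S hS)
  -- `V n` is chosen with `V n * V n ⊆ S n`, and `S (n + 1) = V n ∩ W (n + 1)`.
  let S : ℕ → {S : Set G // S ∈ 𝓝 (1 : G)} := fun n =>
    Nat.rec ⟨W 0, hW 0⟩ (fun n S => ⟨B S.1 S.2 ∩ W (n + 1), inter_mem (hB _ _) (hW _)⟩) n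
  have hS_subset : ∀ n, (S n).1 ⊆ W n
    | 0 => subset_rfl
    | _ + 1 => Set.inter_subset_right
  refine ⟨fun n => B (S n).1 (S n).2, fun n => ⟨hB _ _, hBinv _ _, ?_⟩, fun n => ?_⟩
  · exact (hB_subset _ _).trans (hS_subset n)
  · exact (hBmul _ _).trans Set.inter_subset_left

theorem exists_isQChain_subset_inv_smul {x : G} {U : ℕ → Set G} (hU : ∀ n, U n ∈ 𝓝 x)
    (hcl : ∀ u : ℕ → G, (∀ n, u n ∈ U n) → ∃ p, MapClusterPt p atTop u) :
    ∃ V, IsQChain V ∧ ∀ n, V n ⊆ x⁻¹ • U n := by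
  have hU' (n) : x⁻¹ • U n ∈ 𝓝 (1 : G) := by
    simpa using (smul_mem_nhds_smul_iff x⁻¹).2 (hU n)
  obtain ⟨V, hV, hVmul⟩ := exists_seq_inv_eq_mul_subset hU'
  refine ⟨V, ⟨fun n => (hV n).1, fun n => (hV n).2.1, hVmul, fun v hv => ?_⟩, fun n => (hV n).2.2⟩
  obtain ⟨p, hp⟩ := hcl (fun n => x • v n) fun n => Set.mem_inv_smul_set_iff.1 ((hV n).2.2 (hv n))
  refine ⟨x⁻¹ • p, ?_⟩
  simpa [Function.comp_def] using
    hp.continuousAt_comp (continuous_const_smul x⁻¹).continuousAt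

namespace IsQChain

variable {V : ℕ → Set G}

theorem mem_subgroup_of_mapClusterPt (hV : IsQChain V) {v : ℕ → G} (hv : ∀ n, v n ∈ V n) {p : G}
    (hp : MapClusterPt p atTop v) : p ∈ hV.subgroup := by
  refine Set.mem_iInter.2 fun n => ?_
  have hnhds : p • V (n + 1) ∈ 𝓝 p := by
    simpa using (smul_mem_nhds_smul_iff p).2 (hV.mem_nhds (n + 1))
  obtain ⟨k, ⟨w, hw, hwk⟩, hk⟩ :=
    ((mapClusterPt_iff_frequently.1 hp _ hnhds).and_eventually (eventually_ge_atTop (n + 1))).exists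
  have hvk : v k ∈ V (n + 1) := hV.antitone hk (hv k)
  have hp_eq : p = v k * w⁻¹ := by simp [← hwk]
  exact hp_eq ▸ hV.mul_subset n (Set.mul_mem_mul hvk (hV.inv_mem hw))

theorem exists_subset_of_isOpen (hV : IsQChain V) {O : Set G} (hO : IsOpen O)
    (hNO : (hV.subgroup : Set G) ⊆ O) : ∃ n, V n ⊆ O := by
  by_contra! h
  choose v hv hvO using fun n => Set.not_subset.1 (h n)
  obtain ⟨p, hp⟩ := hV.exists_mapClusterPt v hv
  have hpO : O ∈ 𝓝 p := hO.mem_nhds (hNO (hV.mem_subgroup_of_mapClusterPt hv hp))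
  obtain ⟨n, hn⟩ := (mapClusterPt_iff_frequently.1 hp O hpO).exists
  exact hvO n hn

theorem isSeqCompact_subgroup (hV : IsQChain V) {S : Set G} (hS : IsSeqCompact S)
    (hNS : (hV.subgroup : Set G) ⊆ S) : IsSeqCompact (hV.subgroup : Set G) := by
  intro w hw
  obtain ⟨p, -, φ, hφ, hlim⟩ := hS fun k => hNS (hw k)
  have hp : MapClusterPt p atTop w := (hlim.mapClusterPt).of_comp hφ.tendsto_atTop
  exact ⟨p, hV.mem_subgroup_of_mapClusterPt (fun n => hV.subgroup_subset n (hw n)) hp, φ, hφ, hlim⟩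

end IsQChain

end Chain

theorem QuotientGroup.isOpenMap_smul_const {G : Type*} [Group G] [TopologicalSpace G]
    [IsTopologicalGroup G] {H : Subgroup G} (a : G ⧸ H) : IsOpenMap fun g : G => g • a := by
  induction a using QuotientGroup.induction_on with | H x => ?_
  exact QuotientGroup.isOpenMap_coe.comp (isOpenMap_mul_right x)

section DoubleCosets

variable {G : Type*} [Group G] [TopologicalSpace G] {V : ℕ → Set G}

namespace IsQChain

/-- The double coset space `N\G/H`, as the orbit space of `N = hV.subgroup` acting on `G ⧸ H`. -/
abbrev DoubleCosets (hV : IsQChain V) (H : Subgroup G) : Type _ :=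
  MulAction.orbitRel.Quotient hV.subgroup (G ⧸ H)

variable (hV : IsQChain V) (H : Subgroup G)

local notation "π" => Quotient.mk (MulAction.orbitRel hV.subgroup (G ⧸ H))

theorem mk_eq_mk_iff {a b : G ⧸ H} : π a = π b ↔ ∃ m ∈ hV.subgroup, m • a = b := by
  rw [eq_comm, Quotient.eq, MulAction.orbitRel_apply, MulAction.mem_orbit_iff, Subtype.exists]
  exact ⟨fun ⟨m, hm, h⟩ => ⟨m, hm, h⟩, fun ⟨m, hm, h⟩ => ⟨m, hm, h⟩⟩

theorem mk_smul {m : G} (hm : m ∈ hV.subgroup) (a : G ⧸ H) : π (m • a) = π a :=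
  ((hV.mk_eq_mk_iff H).2 ⟨m, hm, rfl⟩).symm

theorem preimage_image_mk (s : Set (G ⧸ H)) : π ⁻¹' (π '' s) = (hV.subgroup : Set G) • s := by
  ext b
  simp only [Set.mem_preimage, Set.mem_image, hV.mk_eq_mk_iff H, Set.mem_smul, SetLike.mem_coe]
  exact ⟨fun ⟨a, ha, m, hm, h⟩ => ⟨m, hm, a, ha, h⟩, fun ⟨m, hm, a, ha, h⟩ => ⟨a, ha, m, hm, h⟩⟩

def entourage (n : ℕ) : SetRel (hV.DoubleCosets H) (hV.DoubleCosets H) :=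
  {p | ∃ a, ∃ v ∈ V n, π a = p.1 ∧ π (v • a) = p.2}

theorem mk_mem_entourage (a : G ⧸ H) {n : ℕ} {v : G} (hv : v ∈ V n) :
    (π a, π (v • a)) ∈ hV.entourage H n :=
  ⟨a, v, hv, rfl, rfl⟩

theorem exists_mk_smul_eq_of_mem_entourage {a : G ⧸ H} {y : hV.DoubleCosets H} {n : ℕ}
    (h : (π a, y) ∈ hV.entourage H (n + 1)) : ∃ v ∈ V n, π (v • a) = y := by
  obtain ⟨a', v, hv, ha', rfl⟩ := h
  obtain ⟨m, hm, rfl⟩ := (hV.mk_eq_mk_iff H).1 ha'.symm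
  exact ⟨v * m, hV.mul_subgroup_subset n (Set.mul_mem_mul hv hm), by rw [mul_smul]⟩

theorem hasBasis_iInf_entourage :
    (⨅ n, 𝓟 (hV.entourage H n)).HasBasis (fun _ => True) (hV.entourage H) := by
  refine hasBasis_iInf_principal (Antitone.directed_ge fun m n hmn => ?_)
  rintro ⟨_, _⟩ ⟨a, v, hv, rfl, rfl⟩
  exact hV.mk_mem_entourage H a (hV.antitone hmn hv)

def uniformityCore : UniformSpace.Core (hV.DoubleCosets H) :=
  have hB := hV.hasBasis_iInf_entourage H
  .mk' (⨅ n, 𝓟 (hV.entourage H n))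
    (fun r hr x => by
      obtain ⟨n, -, hn⟩ := hB.mem_iff.1 hr
      induction x using Quotient.inductionOn with | h a => ?_
      simpa using hn (hV.mk_mem_entourage H a (hV.one_mem n)))
    (fun r hr => by
      obtain ⟨n, -, hn⟩ := hB.mem_iff.1 hr
      refine mem_of_superset (hB.mem_of_mem (i := n) trivial) ?_
      rintro ⟨_, _⟩ ⟨a, v, hv, rfl, rfl⟩
      exact hn ⟨v • a, v⁻¹, hV.inv_mem hv, rfl, congrArg _ (inv_smul_smul v a)⟩)
    (fun r hr => by
      obtain ⟨n, -, hn⟩ := hB.mem_iff.1 hr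
      refine ⟨hV.entourage H (n + 2), hB.mem_of_mem trivial, ?_⟩
      rintro ⟨_, z⟩ ⟨_, ⟨a, v, hv, rfl, rfl⟩, hz⟩
      obtain ⟨w, hw, rfl⟩ := hV.exists_mk_smul_eq_of_mem_entourage H hz
      have hwv : w * v ∈ V n := hV.mul_subset n (Set.mul_mem_mul hw (hV.antitone (by omega) hv))
      simpa [mul_smul] using hn (hV.mk_mem_entourage H a hwv))

variable [IsTopologicalGroup G]

theorem isOpenMap_mk : IsOpenMap π := by
  intro O hO
  have h : IsOpen (π ⁻¹' (π '' O)) := hV.preimage_image_mk H O ▸ hO.smul_left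
  exact isQuotientMap_quotient_mk'.isOpen_preimage.1 h

theorem hasBasis_nhds_mk (a : G ⧸ H) :
    (𝓝 (π a)).HasBasis (fun _ => True) fun n => π '' ((· • a) '' V n) := by
  refine ⟨fun S => ⟨fun hS => ?_, fun ⟨n, _, hn⟩ => mem_of_superset ?_ hn⟩⟩
  · obtain ⟨O, hOS, hO, haO⟩ := mem_nhds_iff.1 hS
    have hT : IsOpen ((fun g : G => π (g • a)) ⁻¹' O) :=
      hO.preimage (continuous_quotient_mk'.comp (continuous_id.smul continuous_const))
    obtain ⟨n, hn⟩ := hV.exists_subset_of_isOpen hT fun m hm => by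
      simpa [Set.mem_preimage, hV.mk_smul H hm] using haO
    refine ⟨n, trivial, ?_⟩
    rintro _ ⟨_, ⟨v, hv, rfl⟩, rfl⟩
    exact hOS (hn hv)
  · have h := (QuotientGroup.isOpenMap_smul_const a).image_mem_nhds (hV.mem_nhds n)
    rw [one_smul] at h
    exact (hV.isOpenMap_mk H).image_mem_nhds h

theorem exists_mem_smul_mem_of_mem_closure {C : Set (G ⧸ H)} {y : G ⧸ H}
    (hy : y ∈ closure ((hV.subgroup : Set G) • C)) (n : ℕ) : ∃ w ∈ V n, w • y ∈ C := by
  have h := (QuotientGroup.isOpenMap_smul_const y).image_mem_nhds (hV.mem_nhds (n + 1))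
  rw [one_smul] at h
  obtain ⟨_, ⟨v, hv, rfl⟩, m, hm, c, hc, hmc⟩ := mem_closure_iff_nhds.1 hy _ h
  have hmv : m⁻¹ * v ∈ V n := hV.subgroup_mul_subset n (Set.mul_mem_mul (hV.subgroup.inv_mem hm) hv)
  refine ⟨m⁻¹ * v, hmv, ?_⟩
  have hmc : m • c = v • y := hmc
  rwa [mul_smul, ← hmc, inv_smul_smul]

theorem isClosed_subgroup_smul {C : Set (G ⧸ H)} (hC : IsClosed C) :
    IsClosed ((hV.subgroup : Set G) • C) := by
  refine isClosed_of_closure_subset fun y hy => ?_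
  choose w hw hwC using hV.exists_mem_smul_mem_of_mem_closure H hy
  obtain ⟨p, hp⟩ := hV.exists_mapClusterPt w hw
  have hcont : ContinuousAt (fun g : G => g • y) p :=
    (continuous_id.smul continuous_const).continuousAt
  have hpy : MapClusterPt (p • y) atTop (fun n => w n • y) := hp.continuousAt_comp hcont
  have hpC : p • y ∈ C := hC.mem_of_mapClusterPt hpy (.of_forall hwC)
  have hpN : p⁻¹ ∈ hV.subgroup := hV.subgroup.inv_mem (hV.mem_subgroup_of_mapClusterPt hw hp)
  exact ⟨p⁻¹, hpN, p • y, hpC, inv_smul_smul p y⟩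

theorem isClosedMap_mk : IsClosedMap π := by
  intro C hC
  have h : IsClosed (π ⁻¹' (π '' C)) := hV.preimage_image_mk H C ▸ hV.isClosed_subgroup_smul H hC
  exact isQuotientMap_quotient_mk'.isClosed_preimage.1 h

theorem t1Space (hH : IsClosed (H : Set G)) : T1Space (hV.DoubleCosets H) := by
  have : T1Space (G ⧸ H) := QuotientGroup.t1Space_iff.2 hH
  refine ⟨fun x => ?_⟩
  induction x using Quotient.inductionOn with | h a => ?_
  simpa using hV.isClosedMap_mk H _ (isClosed_singleton (x := a))

theorem isSeqCompact_preimage_mk (hN : IsSeqCompact (hV.subgroup : Set G))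
    (y : hV.DoubleCosets H) : IsSeqCompact (π ⁻¹' {y}) := by
  induction y using Quotient.inductionOn with | h a => ?_
  rw [← Set.image_singleton, hV.preimage_image_mk, Set.smul_singleton]
  exact IsSeqCompact.image (continuous_id.smul continuous_const).seqContinuous hN

theorem uniformityCore_toTopologicalSpace :
    (hV.uniformityCore H).toTopologicalSpace =
      (inferInstance : TopologicalSpace (hV.DoubleCosets H)) := by
  refine TopologicalSpace.ext_nhds fun x => ?_
  induction x using Quotient.inductionOn with | h a => ?_
  rw [UniformSpace.Core.nhds_toTopologicalSpace]
  refine ((hV.hasBasis_iInf_entourage H).comap (Prod.mk (π a))).ext (hV.hasBasis_nhds_mk H a)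
    (fun n _ => ⟨n, trivial, ?_⟩) fun n _ => ⟨n + 1, trivial, ?_⟩
  · rintro _ ⟨_, ⟨v, hv, rfl⟩, rfl⟩
    exact hV.mk_mem_entourage H a hv
  · intro y hy
    obtain ⟨v, hv, rfl⟩ := hV.exists_mk_smul_eq_of_mem_entourage H hy
    exact ⟨v • a, ⟨v, hv, rfl⟩, rfl⟩

theorem metrizableSpace (hH : IsClosed (H : Set G)) :
    TopologicalSpace.MetrizableSpace (hV.DoubleCosets H) := by
  let : UniformSpace (hV.DoubleCosets H) :=
    .ofCoreEq (hV.uniformityCore H) _ (hV.uniformityCore_toTopologicalSpace H).symm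
  have : (𝓤 (hV.DoubleCosets H)).IsCountablyGenerated :=
    (hV.hasBasis_iInf_entourage H).isCountablyGenerated
  have := hV.t1Space H hH
  exact UniformSpace.metrizableSpace

end IsQChain

end DoubleCosets

theorem stmt_13_general {G : Type u} [Group G] [TopologicalSpace G] [IsTopologicalGroup G]
    (hq : ∃ (x : G) (U : ℕ → Set G), (∀ n, IsOpen (U n) ∧ x ∈ U n) ∧
      (∀ u : ℕ → G, (∀ n, u n ∈ U n) → ∃ p : G, MapClusterPt p atTop u) ∧
      IsSeqCompact (⋂ n, U n))
    (H : Subgroup G) (hH : IsClosed (H : Set G)) :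
    ∃ (M : Type u) (_ : TopologicalSpace M) (_ : TopologicalSpace.MetrizableSpace M)
      (f : G ⧸ H → M), Continuous f ∧ IsOpenMap f ∧ IsClosedMap f ∧
        ∀ y : M, IsSeqCompact (f ⁻¹' {y}) := by
  obtain ⟨x, U, hU, hcl, hseq⟩ := hq
  obtain ⟨V, hV, hVU⟩ := exists_isQChain_subset_inv_smul (fun n => (hU n).1.mem_nhds (hU n).2) hcl
  have hNU : (hV.subgroup : Set G) ⊆ x⁻¹ • ⋂ n, U n := by
    rw [Set.smul_set_iInter]
    exact Set.subset_iInter fun n => (hV.subgroup_subset n).trans (hVU n)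
  have hN : IsSeqCompact (hV.subgroup : Set G) :=
    hV.isSeqCompact_subgroup (IsSeqCompact.image (continuous_const_smul x⁻¹).seqContinuous hseq) hNU
  exact ⟨hV.DoubleCosets H, inferInstance, hV.metrizableSpace H hH, Quotient.mk _,
    continuous_quotient_mk', hV.isOpenMap_mk H, hV.isClosedMap_mk H,
    hV.isSeqCompact_preimage_mk H hN⟩

/-- if a topological group `G` has a strict q-point and `H` is a closed
subgroup, then `G/H` admits a continuous open closed map onto a metrizable space
with sequentially compact fibers. -/
theorem stmt_13 {G : Type u} [Group G] [TopologicalSpace G] [IsTopologicalGroup G] [T2Space G]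
    (hq : ∃ (x : G) (U : ℕ → Set G), (∀ n, IsOpen (U n) ∧ x ∈ U n) ∧
      (∀ u : ℕ → G, (∀ n, u n ∈ U n) → ∃ p : G, MapClusterPt p atTop u) ∧
      IsSeqCompact (⋂ n, U n))
    (H : Subgroup G) (hH : IsClosed (H : Set G)) :
    ∃ (M : Type u) (_ : TopologicalSpace M) (_ : TopologicalSpace.MetrizableSpace M)
      (f : G ⧸ H → M), Continuous f ∧ IsOpenMap f ∧ IsClosedMap f ∧
        ∀ y : M, IsSeqCompact (f ⁻¹' {y}) :=
  stmt_13_general hq H hH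
end

section
/- Let f : X → Y be a continuous closed map such that f⁻¹(y) is sequentially compact for every y ∈ Y. If Y is first-countable, then X is a strict q-space. -/
open Filter Topology Set

/-
Take an antitone basis `V n` of open neighbourhoods of `f x` and put `U n = f⁻¹(V n)`.
If `u n ∈ U n` then `f ∘ u → f x`, and since `f` is closed the fiber over `f x` meets the
closure of every tail of `u`; a sequential limit of such fiber points is a cluster point
of `u`. The intersection `⋂ U n` is the preimage of the set of points specializing to
`f x`; a closed map lifts specializations into the fiber, so sequential compactness of the
fiber passes to this preimage.
-/

namespace IsClosedMap

variable {X Y : Type*} [TopologicalSpace X] [TopologicalSpace Y] {f : X → Y}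

theorem exists_specializes_of_specializes (hf : IsClosedMap f) {x : X} {y : Y}
    (h : f x ⤳ y) : ∃ x', x ⤳ x' ∧ f x' = y := by
  rw [specializes_iff_mem_closure, ← image_singleton] at h
  obtain ⟨x', hx', rfl⟩ := hf.closure_image_subset _ h
  exact ⟨x', specializes_iff_mem_closure.mpr hx', rfl⟩

theorem exists_mapClusterPt_of_tendsto (hf : IsClosedMap f) {y : Y}
    (hfib : IsSeqCompact (f ⁻¹' {y})) {u : ℕ → X} (hu : Tendsto (f ∘ u) atTop (𝓝 y)) :
    ∃ p, f p = y ∧ MapClusterPt p atTop u := by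
  have hfiber_meets_tail : ∀ k, ∃ p ∈ closure (u '' Ici k), f p = y := fun k =>
    hf.closure_image_subset _ <| by
      rw [← image_comp]
      exact mem_closure_of_tendsto hu
        ((eventually_ge_atTop k).mono fun n hn => mem_image_of_mem _ hn)
  choose p hp hpy using hfiber_meets_tail
  obtain ⟨q, hq, φ, hφ, hconv⟩ := hfib (x := p) hpy
  refine ⟨q, hq, mapClusterPt_atTop_iff_forall_mem_closure.mpr fun k => ?_⟩
  refine isClosed_closure.mem_of_tendsto hconv ((eventually_ge_atTop k).mono fun j hj => ?_)
  exact closure_mono (image_mono (Ici_subset_Ici.mpr (hj.trans (hφ.id_le j)))) (hp (φ j))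

theorem isSeqCompact_preimage_setOf_specializes (hf : IsClosedMap f) {y : Y}
    (hfib : IsSeqCompact (f ⁻¹' {y})) : IsSeqCompact (f ⁻¹' {z | z ⤳ y}) := by
  intro u hu
  choose w hw hwy using fun k => hf.exists_specializes_of_specializes (hu k)
  obtain ⟨q, hq, φ, hφ, hconv⟩ := hfib (x := w) hwy
  refine ⟨q, (hq : f q = y) ▸ specializes_rfl, φ, hφ, tendsto_nhds.mpr fun W hW hqW => ?_⟩
  filter_upwards [tendsto_nhds.mp hconv W hW hqW] with j hj
  exact (hw (φ j)).mem_open hW hj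

end IsClosedMap

/-- if `f : X → Y` is continuous and closed with sequentially compact
fibers and `Y` is first-countable, then `X` is a strict q-space. -/
theorem stmt_14 {X Y : Type*} [TopologicalSpace X] [TopologicalSpace Y]
    (f : X → Y) (hf : Continuous f) (hclosed : IsClosedMap f)
    (hfib : ∀ y : Y, IsSeqCompact (f ⁻¹' {y}))
    [FirstCountableTopology Y] :
    ∀ x : X, ∃ U : ℕ → Set X, (∀ n, IsOpen (U n) ∧ x ∈ U n) ∧
      (∀ u : ℕ → X, (∀ n, u n ∈ U n) → ∃ p : X, MapClusterPt p atTop u) ∧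
      IsSeqCompact (⋂ n, U n) := by
  intro x
  obtain ⟨V, hV, hVbasis⟩ := (nhds_basis_opens (f x)).exists_antitone_subbasis
  refine ⟨fun n => f ⁻¹' V n, fun n => ⟨(hV n).2.preimage hf, (hV n).1⟩, fun u hu => ?_, ?_⟩
  · obtain ⟨p, -, hp⟩ := hclosed.exists_mapClusterPt_of_tendsto (hfib _) (hVbasis.tendsto hu)
    exact ⟨p, hp⟩
  · have hker : ⋂ n, f ⁻¹' V n = f ⁻¹' {z | z ⤳ f x} := by
      rw [← preimage_iInter, ← ker_nhds_eq_specializes, hVbasis.ker]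
      simp only [iInter_true]
    rw [hker]
    exact hclosed.isSeqCompact_preimage_setOf_specializes (hfib _)
end

section
/- Let f : X → Y be a continuous open map. If A ⊆ X has a strongly countable neighborhood base, then f(A) has a strongly countable neighborhood base in Y. -/
open Filter Topology

/-- `U` is a strongly countable neighborhood base at `A`: a decreasing-free countable
base of open neighborhoods of `A` such that every sequence choosing points from the
`U n` has a convergent subsequence. -/
def StronglyCountableNhdBase {X : Type*} [TopologicalSpace X] (A : Set X)
    (U : ℕ → Set X) : Prop :=
  (∀ n, IsOpen (U n) ∧ A ⊆ U n) ∧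
  (∀ O : Set X, IsOpen O → A ⊆ O → ∃ n, U n ⊆ O) ∧
  (∀ u : ℕ → X, (∀ n, u n ∈ U n) →
    ∃ φ : ℕ → ℕ, StrictMono φ ∧ ∃ p : X, Tendsto (u ∘ φ) atTop (𝓝 p))

theorem StronglyCountableNhdBase.image {X Y : Type*} [TopologicalSpace X]
    [TopologicalSpace Y] {f : X → Y} (hf : Continuous f) (hopen : IsOpenMap f)
    {A : Set X} {U : ℕ → Set X} (hU : StronglyCountableNhdBase A U) :
    StronglyCountableNhdBase (f '' A) (fun n => f '' U n) := by
  obtain ⟨hU_nhd, hU_base, hU_subseq⟩ := hU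
  refine ⟨fun n => ⟨hopen _ (hU_nhd n).1, Set.image_mono (hU_nhd n).2⟩, ?_, ?_⟩
  · intro O hO hAO
    obtain ⟨n, hn⟩ := hU_base (f ⁻¹' O) (hO.preimage hf) (Set.image_subset_iff.mp hAO)
    exact ⟨n, Set.image_subset_iff.mpr hn⟩
  · intro u hu
    choose x hx hfx using hu
    obtain ⟨φ, hφ, p, hp⟩ := hU_subseq x hx
    exact ⟨φ, hφ, f p, ((hf.tendsto p).comp hp).congr fun n => hfx (φ n)⟩

/-- continuous open maps preserve the existence of a strongly countable
neighborhood base: if `A ⊆ X` has one, so does `f(A)` in `Y`. -/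
theorem stmt_15 {X Y : Type*} [TopologicalSpace X] [TopologicalSpace Y]
    (f : X → Y) (hf : Continuous f) (hopen : IsOpenMap f) (A : Set X)
    (hA : ∃ U : ℕ → Set X, StronglyCountableNhdBase A U) :
    ∃ W : ℕ → Set Y, StronglyCountableNhdBase (f '' A) W := by
  obtain ⟨U, hU⟩ := hA
  exact ⟨_, hU.image hf hopen⟩
end

section
/- Let H be a closed neutral subgroup of a topological group G, and suppose H contains a subgroup K such that the quotient space G/K is first-countable. Then the quotient space G/H is metrizable. -/
open scoped Pointwise
open Filter Set Topology Uniformity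
open scoped SetRel

section Aux

variable {G : Type*} [Group G] [TopologicalSpace G] [IsTopologicalGroup G]

/-- The basic entourages on the coset space. -/
def stmt18Rel (H : Subgroup G) (V : Set G) : Set ((G ⧸ H) × (G ⧸ H)) :=
  {p | ∃ x y : G, (x : G ⧸ H) = p.1 ∧ (y : G ⧸ H) = p.2 ∧ x⁻¹ * y ∈ V * (H : Set G)}

theorem stmt18Rel_mono {H : Subgroup G} {V W : Set G}
    (h : V * (H : Set G) ⊆ W * (H : Set G)) : stmt18Rel H V ⊆ stmt18Rel H W := by
  rintro p ⟨x, y, hx, hy, hxy⟩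
  exact ⟨x, y, hx, hy, h hxy⟩

theorem stmt18Rel_monotone (H : Subgroup G) : Monotone (stmt18Rel H) := fun V W h =>
  stmt18Rel_mono (Set.mul_subset_mul_right h)

theorem mem_mulH {H : Subgroup G} {V : Set G} {g : G} :
    g ∈ V * (H : Set G) ↔ ∃ v ∈ V, ∃ h ∈ H, v * h = g := by
  simp [Set.mem_mul]

theorem mulH_mul_mem {H : Subgroup G} {V : Set G} {g h : G}
    (hg : g ∈ V * (H : Set G)) (hh : h ∈ H) : g * h ∈ V * (H : Set G) := by
  obtain ⟨v, hv, k, hk, rfl⟩ := mem_mulH.1 hg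
  exact mem_mulH.2 ⟨v, hv, k * h, H.mul_mem hk hh, (mul_assoc _ _ _).symm⟩

theorem mul_mulH_mem {H : Subgroup G} {V W : Set G}
    (hVW : (H : Set G) * V ⊆ W * (H : Set G)) {g h : G}
    (hh : h ∈ H) (hg : g ∈ V * (H : Set G)) : h * g ∈ W * (H : Set G) := by
  obtain ⟨v, hv, k, hk, rfl⟩ := mem_mulH.1 hg
  have : h * v ∈ W * (H : Set G) := hVW ⟨h, hh, v, hv, rfl⟩
  have := mulH_mul_mem this hk
  rwa [mul_assoc] at this

end Aux

/-- if `H` is a closed neutral subgroup of a topological group `G`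
containing a subgroup `K` with `G/K` first-countable, then `G/H` is metrizable. -/
theorem stmt_18 {G : Type*} [Group G] [TopologicalSpace G] [IsTopologicalGroup G] [T2Space G]
    (H K : Subgroup G) (hKH : K ≤ H) (hH : IsClosed (H : Set G))
    (hneutral : ∀ U : Set G, IsOpen U → (1 : G) ∈ U →
      ∃ V : Set G, IsOpen V ∧ (1 : G) ∈ V ∧ (H : Set G) * V ⊆ U * (H : Set G))
    (hfc : FirstCountableTopology (G ⧸ K)) :
    TopologicalSpace.MetrizableSpace (G ⧸ H) := by
  classical
  set U : Filter ((G ⧸ H) × (G ⧸ H)) := (𝓝 (1 : G)).lift' (stmt18Rel H) with hU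
  have hB : U.HasBasis (fun V : Set G => (1 : G) ∈ V ∧ IsOpen V) (stmt18Rel H) :=
    (nhds_basis_opens (1 : G)).lift' (stmt18Rel_monotone H)
  -- symmetry
  have hsymm : Filter.Tendsto Prod.swap U U := by
    rw [hB.tendsto_iff hB]
    rintro V ⟨hV1, hVo⟩
    obtain ⟨W, hWo, hW1, hWV⟩ := hneutral V hVo hV1
    refine ⟨W⁻¹, ⟨by simpa using hW1, hWo.inv⟩, ?_⟩
    rintro ⟨a, b⟩ ⟨x, y, hx, hy, hxy⟩
    refine ⟨y, x, hy, hx, ?_⟩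
    obtain ⟨w, hw, h, hh, hwh⟩ := mem_mulH.1 hxy
    have hw' : w⁻¹ ∈ W := Set.mem_inv.1 hw
    have heq : y⁻¹ * x = h⁻¹ * w⁻¹ := by
      have : x⁻¹ * y = w * h := hwh.symm
      have := congrArg (·⁻¹) this
      simpa [mul_inv_rev] using this
    rw [heq]
    have : w⁻¹ ∈ W * (H : Set G) := mem_mulH.2 ⟨w⁻¹, hw', 1, H.one_mem, mul_one _⟩
    exact mul_mulH_mem hWV (H.inv_mem hh) this
  -- composition
  have hcomp : (U.lift' fun s => s ○ s) ≤ U := by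
    intro s hs
    obtain ⟨V, ⟨hV1, hVo⟩, hVs⟩ := hB.mem_iff.1 hs
    obtain ⟨W₁, hW₁o, hW₁1, hW₁V⟩ := exists_open_nhds_one_mul_subset (hVo.mem_nhds hV1)
    obtain ⟨W₂, hW₂o, hW₂1, hW₂W₁⟩ := hneutral W₁ hW₁o hW₁1
    have hmem : stmt18Rel H (W₁ ∩ W₂) ∈ U :=
      hB.mem_of_mem ⟨⟨hW₁1, hW₂1⟩, hW₁o.inter hW₂o⟩
    refine Filter.mem_of_superset (Filter.mem_lift' hmem) ?_
    rintro ⟨a, c⟩ ⟨b, ⟨x, y, hx, hy, hxy⟩, ⟨y', z, hy', hz, hyz⟩⟩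
    refine hVs ⟨x, z, hx, hz, ?_⟩
    have hk : y⁻¹ * y' ∈ H := (QuotientGroup.eq).1 (hy.trans hy'.symm)
    obtain ⟨w, hw, h, hh, hwh⟩ := mem_mulH.1 hxy
    obtain ⟨w', hw', h', hh', hwh'⟩ := mem_mulH.1 hyz
    -- x⁻¹ * z = (w * h) * (y⁻¹ * y') * (w' * h')
    have hxz : x⁻¹ * z = w * ((h * (y⁻¹ * y')) * (w' * h')) := by
      have : x⁻¹ * z = (x⁻¹ * y) * ((y⁻¹ * y') * (y'⁻¹ * z)) := by group
      rw [this, ← hwh, ← hwh']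
      group
    have hmid : (h * (y⁻¹ * y')) * (w' * h') ∈ W₁ * (H : Set G) := by
      have h1 : h * (y⁻¹ * y') ∈ H := H.mul_mem hh hk
      have h2 : w' * h' ∈ (W₁ ∩ W₂) * (H : Set G) := mem_mulH.2 ⟨w', hw', h', hh', rfl⟩
      have h2' : w' * h' ∈ W₂ * (H : Set G) :=
        Set.mul_subset_mul_right (Set.inter_subset_right) h2
      exact mul_mulH_mem hW₂W₁ h1 h2'
    obtain ⟨w₁, hw₁, h₁, hh₁, hw₁h₁⟩ := mem_mulH.1 hmid
    rw [hxz, ← hw₁h₁, ← mul_assoc]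
    exact mem_mulH.2 ⟨w * w₁, hW₁V ⟨w, hw.1, w₁, hw₁, rfl⟩, h₁, hh₁, rfl⟩
  -- neighborhoods
  have hnhds : ∀ a : G ⧸ H, 𝓝 a = Filter.comap (Prod.mk a) U := by
    intro a
    obtain ⟨x, rfl⟩ := QuotientGroup.mk_surjective a
    refine le_antisymm ?_ ?_
    · rw [(hB.comap (Prod.mk (x : G ⧸ H))).ge_iff]
      rintro V ⟨hV1, hVo⟩
      have hopen : IsOpen ((QuotientGroup.mk '' (x • V) : Set (G ⧸ H))) :=
        QuotientGroup.isOpenMap_coe _ (hVo.smul x)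
      refine Filter.mem_of_superset (hopen.mem_nhds ?_) ?_
      · exact ⟨x, ⟨1, hV1, by simp⟩, by simp⟩
      · rintro b ⟨g, ⟨v, hv, rfl⟩, rfl⟩
        refine ⟨x, x • v, rfl, rfl, ?_⟩
        simp only [smul_eq_mul]
        refine mem_mulH.2 ⟨x⁻¹ * (x * v), by simpa using hv, 1, H.one_mem, mul_one _⟩
    · intro O hO
      obtain ⟨Q, hQO, hQo, hxQ⟩ := mem_nhds_iff.1 hO
      set T : Set G := (fun g => x * g) ⁻¹' (QuotientGroup.mk ⁻¹' Q) with hT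
      have hTo : IsOpen T := ((QuotientGroup.continuous_mk.comp
        (continuous_mul_left x)).isOpen_preimage _ hQo)
      have hT1 : (1 : G) ∈ T := by
        simp only [hT, Set.mem_preimage, mul_one]
        exact hxQ
      obtain ⟨W, hWo, hW1, hWT⟩ := hneutral T hTo hT1
      refine Filter.mem_comap.2 ⟨stmt18Rel H W, hB.mem_of_mem ⟨hW1, hWo⟩, ?_⟩
      rintro b ⟨x', y, hx', hy, hxy⟩
      have hxx' : x⁻¹ * x' ∈ H := (QuotientGroup.eq).1 hx'.symm
      have hmem : (x⁻¹ * x') * (x'⁻¹ * y) ∈ T * (H : Set G) :=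
        mul_mulH_mem hWT hxx' hxy
      have hxy' : x⁻¹ * y ∈ T * (H : Set G) := by
        have : (x⁻¹ * x') * (x'⁻¹ * y) = x⁻¹ * y := by group
        rwa [this] at hmem
      obtain ⟨t, ht, h, hh, hth⟩ := mem_mulH.1 hxy'
      have hyeq : y = (x * t) * h := by
        have : y = x * (x⁻¹ * y) := by group
        rw [this, ← hth, mul_assoc]
      have : (y : G ⧸ H) = ((x * t : G) : G ⧸ H) := by
        rw [hyeq]; exact QuotientGroup.mk_mul_of_mem _ hh
      have hyb : (y : G ⧸ H) = b := hy
      rw [← hyb, this]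
      exact hQO (ht : x * t ∈ QuotientGroup.mk ⁻¹' Q)
  -- countably generated
  have hcount : U.IsCountablyGenerated := by
    obtain ⟨s, hs⟩ := (𝓝 ((1 : G) : G ⧸ K)).exists_antitone_basis
    set V : ℕ → Set G := fun n => (QuotientGroup.mk : G → G ⧸ K) ⁻¹' s n with hV
    have hVmem : ∀ n, V n ∈ 𝓝 (1 : G) := fun n =>
      QuotientGroup.continuous_mk.continuousAt.preimage_mem_nhds (hs.mem n)
    have hbasis : U.HasBasis (fun _ : ℕ => True) (fun n => stmt18Rel H (V n)) := by
      refine hB.to_hasBasis (fun T ⟨hT1, hTo⟩ => ?_) (fun n _ => ?_)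
      · -- find n with rel (V n) ⊆ rel T
        have hTH : IsOpen (T * (H : Set G)) := hTo.mul_right
        have hsat : (QuotientGroup.mk : G → G ⧸ K) ⁻¹'
            ((QuotientGroup.mk : G → G ⧸ K) '' (T * (H : Set G))) ⊆ T * (H : Set G) := by
          rw [QuotientGroup.preimage_image_mk_eq_mul]
          rintro g ⟨a, ha, k, hk, rfl⟩
          exact mulH_mul_mem ha (hKH hk)
        have hopen : IsOpen ((QuotientGroup.mk : G → G ⧸ K) '' (T * (H : Set G))) :=
          QuotientGroup.isOpenMap_coe _ hTH
        have hmem1 : ((1 : G) : G ⧸ K) ∈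
            (QuotientGroup.mk : G → G ⧸ K) '' (T * (H : Set G)) :=
          ⟨1, mem_mulH.2 ⟨1, hT1, 1, H.one_mem, mul_one _⟩, rfl⟩
        obtain ⟨n, hn⟩ := hs.toHasBasis.mem_iff.1 (hopen.mem_nhds hmem1)
        refine ⟨n, trivial, stmt18Rel_mono ?_⟩
        have hVn : V n ⊆ T * (H : Set G) := fun g hg =>
          hsat (hn.2 hg)
        rintro g hg
        obtain ⟨v, hv, h, hh, rfl⟩ := mem_mulH.1 hg
        exact mulH_mul_mem (hVn hv) hh
      · -- find open nhd V' with rel V' ⊆ rel (V n)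
        refine ⟨interior (V n), ⟨mem_interior_iff_mem_nhds.2 (hVmem n), isOpen_interior⟩,
          stmt18Rel_monotone H interior_subset⟩
    exact hbasis.isCountablyGenerated
  -- assemble the uniform space
  letI u : UniformSpace (G ⧸ H) :=
    { toTopologicalSpace := inferInstance
      uniformity := U
      symm := hsymm
      comp := hcomp
      nhds_eq_comap_uniformity := hnhds }
  haveI : Filter.IsCountablyGenerated (uniformity (G ⧸ H)) := hcount
  haveI : T1Space (G ⧸ H) := by
    refine ⟨fun a => ?_⟩
    obtain ⟨x, rfl⟩ := QuotientGroup.mk_surjective a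
    rw [← (QuotientGroup.isQuotientMap_mk H).isClosed_preimage]
    have : ((QuotientGroup.mk : G → G ⧸ H) ⁻¹' {((x : G ⧸ H))}) =
        (fun g => g⁻¹ * x) ⁻¹' (H : Set G) := by
      ext g
      simp only [Set.mem_preimage, Set.mem_singleton_iff, SetLike.mem_coe]
      rw [QuotientGroup.eq]
    rw [this]
    exact hH.preimage (by fun_prop)
  exact UniformSpace.metrizableSpace
end

section
/- Let f : X → Y be a continuous open surjection onto a first-countable space Y such that f⁻¹(F) is r-pseudocompact in X for every r-pseudocompact set F in Y. Then X is pointwise pseudocompact. -/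
open Filter Topology

/-- A subset `A` of `Z` is r-pseudocompact in `Z` if every infinite family of open
sets of `Z`, each meeting `A`, has an accumulation point in `A` (i.e. a point of `A`
each of whose neighborhoods meets infinitely many members of the family). -/
def RPseudocompactIn {Z : Type*} [TopologicalSpace Z] (A : Set Z) : Prop :=
  ∀ 𝒢 : Set (Set Z), 𝒢.Infinite → (∀ V ∈ 𝒢, IsOpen V) → (∀ V ∈ 𝒢, (V ∩ A).Nonempty) →
    ∃ x ∈ A, ∀ W ∈ 𝓝 x, {V ∈ 𝒢 | (W ∩ V).Nonempty}.Infinite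

/-!
Fix `x` and a countable decreasing neighbourhood basis `Bₙ` of `f x`, and take
`Uₙ = f⁻¹(int Bₙ)`. Given nonempty open `Vₙ ⊆ Uₙ`, pick `xₙ ∈ Vₙ`; then `f xₙ → f x`,
so `F = {f x} ∪ {f xₙ}` is compact, hence r-pseudocompact, and so is `f⁻¹(F)` by
hypothesis. Every `Vₙ` meets `f⁻¹(F)` (at `xₙ`), so the family `{Vₙ}` accumulates at a
point of `f⁻¹(F)`, unless it has only finitely many distinct members, in which case one
of them repeats infinitely often and any of its points will do.
-/

section RPseudocompact

variable {Z : Type*} [TopologicalSpace Z]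

theorem IsCompact.rPseudocompactIn {K : Set Z} (hK : IsCompact K) : RPseudocompactIn K := by
  intro 𝒢 h𝒢 _ hmeet
  by_contra! hnot
  -- The sets meeting only finitely many members of `𝒢` form an ideal; compactness puts `K`
  -- in it, while every member of `𝒢` meets `K`.
  have hKfin : {V ∈ 𝒢 | (K ∩ V).Nonempty}.Finite := by
    refine hK.induction_on (p := fun W ↦ {V ∈ 𝒢 | (W ∩ V).Nonempty}.Finite) ?_ ?_ ?_ ?_
    · simp
    · intro s t hst ht
      exact ht.subset fun V ⟨hV, hsV⟩ ↦ ⟨hV, hsV.mono (Set.inter_subset_inter_left _ hst)⟩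
    · intro s t hs ht
      refine (hs.union ht).subset fun V ⟨hV, hstV⟩ ↦ ?_
      rw [Set.union_inter_distrib_right, Set.union_nonempty] at hstV
      exact hstV.imp (⟨hV, ·⟩) (⟨hV, ·⟩)
    · intro z hz
      obtain ⟨W, hW, hfin⟩ := hnot z hz
      exact ⟨W, mem_nhdsWithin_of_mem_nhds hW, hfin⟩
  exact h𝒢 (hKfin.subset fun V hV ↦ ⟨hV, Set.inter_comm V K ▸ hmeet V hV⟩)

theorem exists_forall_nhds_infinite_of_finite_range {V : ℕ → Set Z}
    (hne : ∀ n, (V n).Nonempty) (hfin : (Set.range V).Finite) :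
    ∃ p, ∀ W ∈ 𝓝 p, {n | (W ∩ V n).Nonempty}.Infinite := by
  have := hfin.to_subtype
  obtain ⟨⟨-, m, rfl⟩, hfiber⟩ := Finite.exists_infinite_fiber (Set.rangeFactorization V)
  obtain ⟨p, hp⟩ := hne m
  refine ⟨p, fun W hW ↦ (Set.infinite_coe_iff.1 hfiber).mono fun n hn ↦ ?_⟩
  have hVn : V n = V m := congrArg Subtype.val hn
  exact ⟨p, mem_of_mem_nhds hW, hVn ▸ hp⟩

theorem RPseudocompactIn.exists_forall_nhds_infinite {A : Set Z} (hA : RPseudocompactIn A)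
    {V : ℕ → Set Z} (hV : ∀ n, IsOpen (V n)) (hVA : ∀ n, (V n ∩ A).Nonempty) :
    ∃ p, ∀ W ∈ 𝓝 p, {n | (W ∩ V n).Nonempty}.Infinite := by
  by_cases hfin : (Set.range V).Finite
  · exact exists_forall_nhds_infinite_of_finite_range (fun n ↦ (hVA n).left) hfin
  obtain ⟨p, -, hp⟩ := hA (Set.range V) hfin (Set.forall_mem_range.2 hV)
    (Set.forall_mem_range.2 hVA)
  refine ⟨p, fun W hW ↦ Set.Infinite.of_image V ((hp W hW).mono ?_)⟩
  rintro _ ⟨⟨n, rfl⟩, hWV⟩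
  exact ⟨n, hWV, rfl⟩

end RPseudocompact

theorem stmt_19_general {X Y : Type*} [TopologicalSpace X] [TopologicalSpace Y]
    (f : X → Y) (hf : Continuous f) [FirstCountableTopology Y]
    (hr : ∀ F : Set Y, RPseudocompactIn F → RPseudocompactIn (f ⁻¹' F)) :
    ∀ x : X, ∃ U : ℕ → Set X, (∀ n, IsOpen (U n) ∧ x ∈ U n) ∧
      ∀ V : ℕ → Set X, (∀ n, IsOpen (V n) ∧ (V n).Nonempty ∧ V n ⊆ U n) →
        ∃ p : X, ∀ W ∈ 𝓝 p, {n : ℕ | (W ∩ V n).Nonempty}.Infinite := by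
  intro x
  obtain ⟨B, hB⟩ := (𝓝 (f x)).exists_antitone_basis
  refine ⟨fun n ↦ f ⁻¹' interior (B n), fun n ↦ ⟨isOpen_interior.preimage hf,
    Set.mem_preimage.2 (mem_of_mem_nhds (interior_mem_nhds.2 (hB.mem n)))⟩, ?_⟩
  intro V hV
  choose xs hxs using fun n ↦ (hV n).2.1
  have hlim : Tendsto (f ∘ xs) atTop (𝓝 (f x)) :=
    hB.tendsto fun n ↦ interior_subset ((hV n).2.2 (hxs n))
  have hpre := hr _ hlim.isCompact_insert_range.rPseudocompactIn
  exact hpre.exists_forall_nhds_infinite (fun n ↦ (hV n).1)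
    fun n ↦ ⟨xs n, hxs n, Or.inr ⟨n, rfl⟩⟩

/-- if `f : X → Y` is a continuous open surjection onto a
first-countable space such that preimages of r-pseudocompact sets are
r-pseudocompact, then `X` is pointwise pseudocompact. -/
theorem stmt_19 {X Y : Type*} [TopologicalSpace X] [TopologicalSpace Y]
    (f : X → Y) (hf : Continuous f) (hopen : IsOpenMap f)
    (hsurj : Function.Surjective f) [FirstCountableTopology Y]
    (hr : ∀ F : Set Y, RPseudocompactIn F → RPseudocompactIn (f ⁻¹' F)) :
    ∀ x : X, ∃ U : ℕ → Set X, (∀ n, IsOpen (U n) ∧ x ∈ U n) ∧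
      ∀ V : ℕ → Set X, (∀ n, IsOpen (V n) ∧ (V n).Nonempty ∧ V n ⊆ U n) →
        ∃ p : X, ∀ W ∈ 𝓝 p, {n : ℕ | (W ∩ V n).Nonempty}.Infinite :=
  stmt_19_general f hf hr
end
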